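/- arXiv:1206.3337 — 9 statements merged into one kernel-verified Lean document; each statement's English description precedes it below -/
import Mathlib

section
/- Let S be an ℝ≥0-module, let W be a Hausdorff locally convex real topological vector space, and let A be a linear set-valued map assigning to each z ∈ S a nonempty compact convex subset A(z) ⊆ W. Then for every x ∈ S and every y ∈ A(x) there exists a linear selection a of A with a(x) = y. -/
/-!
By Zorn's lemma, every linear set-valued map `B` with nonempty compact convex values contains a
minimal one: along a chain, pointwise intersections stay additive by compactness. A minimal one is
single-valued, because for a functional `l` separating two points of some value, the faces of the
values exposed by `l` form a smaller map of the same kind; hence every such `B` has a linear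
selection. Applied to the map of faces exposed by an arbitrary functional, this shows that the
values at `x` of the linear selections of `A` form a compact convex set meeting every exposed face
of `A x`, so by Hahn–Banach separation they exhaust `A x`.
-/

open scoped NNReal Pointwise

open Set

theorem Set.smul_set_iInter₀ {G₀ β ι : Type*} [GroupWithZero G₀] [MulAction G₀ β] {c : G₀}
    (hc : c ≠ 0) (t : ι → Set β) : c • ⋂ i, t i = ⋂ i, c • t i :=
  image_iInter (MulAction.bijective₀ hc) t

theorem Set.iInter_add_iInter_of_directed {W ι : Type*} [TopologicalSpace W] [Add W]
    [ContinuousAdd W] [T2Space W] [Nonempty ι] {s t : ι → Set W}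
    (hd : Directed (· ⊇ ·) fun i => s i ×ˢ t i) (hs : ∀ i, IsCompact (s i))
    (ht : ∀ i, IsCompact (t i)) : (⋂ i, s i) + ⋂ i, t i = ⋂ i, (s i + t i) := by
  refine (subset_iInter fun i => add_subset_add (iInter_subset _ i) (iInter_subset _ i)).antisymm
    ?_
  intro w hw
  -- a compactness argument picks the decompositions `w = p + q` coherently along the family
  set D : ι → Set (W × W) := fun i => s i ×ˢ t i ∩ (fun pq => pq.1 + pq.2) ⁻¹' {w}
  have hDc : ∀ i, IsCompact (D i) := fun i =>
    ((hs i).prod (ht i)).inter_right (isClosed_singleton.preimage continuous_add)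
  have hDne : ∀ i, (D i).Nonempty := fun i => by
    obtain ⟨p, hp, q, hq, hpq⟩ := mem_iInter.1 hw i
    exact ⟨(p, q), ⟨hp, hq⟩, hpq⟩
  obtain ⟨⟨p, q⟩, hpq⟩ := IsCompact.nonempty_iInter_of_directed_nonempty_isCompact_isClosed D
    (hd.mono_comp (· ⊇ ·) (g := (· ∩ _)) fun _ _ h => inter_subset_inter_left _ h) hDne hDc
    fun i => (hDc i).isClosed
  simp only [D, mem_iInter, mem_inter_iff, mem_prod, mem_preimage, mem_singleton_iff] at hpq
  exact ⟨p, mem_iInter.2 fun i => (hpq i).1.1, q, mem_iInter.2 fun i => (hpq i).1.2,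
    (hpq (Classical.arbitrary ι)).2⟩

namespace ContinuousLinearMap

variable {𝕜 E : Type*} [TopologicalSpace 𝕜] [Ring 𝕜] [LinearOrder 𝕜] [IsStrictOrderedRing 𝕜]
  [AddCommMonoid E] [TopologicalSpace E] [Module 𝕜 E]

theorem toExposed_add (l : StrongDual 𝕜 E) (s t : Set E) :
    l.toExposed (s + t) = l.toExposed s + l.toExposed t := by
  ext w
  constructor
  · rintro ⟨⟨p, hp, q, hq, rfl⟩, hmax⟩
    refine ⟨p, ⟨hp, fun r hr => ?_⟩, q, ⟨hq, fun r hr => ?_⟩, rfl⟩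
    · simpa using hmax (r + q) (add_mem_add hr hq)
    · simpa using hmax (p + r) (add_mem_add hp hr)
  · rintro ⟨p, ⟨hp, hpmax⟩, q, ⟨hq, hqmax⟩, rfl⟩
    refine ⟨add_mem_add hp hq, ?_⟩
    rintro _ ⟨r₁, hr₁, r₂, hr₂, rfl⟩
    simpa using add_le_add (hpmax r₁ hr₁) (hqmax r₂ hr₂)

theorem toExposed_smul (l : StrongDual 𝕜 E) {c : 𝕜} (hc : 0 < c) (s : Set E) :
    l.toExposed (c • s) = c • l.toExposed s := by
  ext w
  constructor
  · rintro ⟨⟨p, hp, rfl⟩, hmax⟩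
    refine ⟨p, ⟨hp, fun r hr => ?_⟩, rfl⟩
    simpa [mul_le_mul_iff_right₀ hc] using hmax (c • r) (smul_mem_smul_set hr)
  · rintro ⟨p, ⟨hp, hmax⟩, rfl⟩
    refine ⟨smul_mem_smul_set hp, ?_⟩
    rintro _ ⟨r, hr, rfl⟩
    simpa [mul_le_mul_iff_right₀ hc] using hmax r hr

end ContinuousLinearMap

section SetValued

variable {S W : Type*} [Add S] [SMul ℝ≥0 S] [AddCommGroup W] [Module ℝ W]

structure IsLinearSelection (B : S → Set W) (a : S → W) : Prop where
  mem : ∀ z, a z ∈ B z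
  map_add : ∀ u v, a (u + v) = a u + a v
  map_smul : ∀ c : ℝ≥0, 0 < c → ∀ u, a (c • u) = (c : ℝ) • a u

theorem convex_setOf_isLinearSelection {B : S → Set W} (hB : ∀ z, Convex ℝ (B z)) :
    Convex ℝ {a | IsLinearSelection B a} := by
  rintro a₁ ⟨ha₁, ha₁_add, ha₁_smul⟩ a₂ ⟨ha₂, ha₂_add, ha₂_smul⟩ p q hp hq hpq
  refine ⟨fun z => hB z (ha₁ z) (ha₂ z) hp hq hpq, fun u v => ?_, fun c hc u => ?_⟩
  · simp only [Pi.add_apply, Pi.smul_apply, ha₁_add, ha₂_add, smul_add]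
    abel
  · simp only [Pi.add_apply, Pi.smul_apply, ha₁_smul c hc, ha₂_smul c hc, smul_add, smul_comm p,
      smul_comm q]

variable [TopologicalSpace W]

theorem isCompact_setOf_isLinearSelection [ContinuousAdd W] [ContinuousConstSMul ℝ W] [T2Space W]
    {B : S → Set W} (hB : ∀ z, IsCompact (B z)) : IsCompact {a | IsLinearSelection B a} := by
  have hsel : {a | IsLinearSelection B a} = univ.pi B ∩
      {a | ∀ u v, a (u + v) = a u + a v} ∩
      ⋂ (c : ℝ≥0) (_ : 0 < c) (u : S), {a | a (c • u) = (c : ℝ) • a u} := by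
    ext a
    simp only [mem_inter_iff, mem_univ_pi, mem_iInter]
    exact ⟨fun h => ⟨⟨h.mem, h.map_add⟩, h.map_smul⟩, fun ⟨⟨h₁, h₂⟩, h₃⟩ => ⟨h₁, h₂, h₃⟩⟩
  rw [hsel]
  refine ((isCompact_univ_pi hB).inter_right (isClosed_setOfPred_map_add S W)).inter_right ?_
  exact isClosed_iInter fun c => isClosed_iInter fun _ => isClosed_iInter fun u =>
    isClosed_eq (continuous_apply _) ((continuous_apply u).const_smul _)

structure IsCompactConvexLinear (B : S → Set W) : Prop where
  nonempty : ∀ z, (B z).Nonempty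
  isCompact : ∀ z, IsCompact (B z)
  convex : ∀ z, Convex ℝ (B z)
  add : ∀ u v, B u + B v = B (u + v)
  smul : ∀ c : ℝ≥0, 0 < c → ∀ u, B (c • u) = (c : ℝ) • B u

namespace IsCompactConvexLinear

variable [T2Space W] {B : S → Set W}

theorem toExposed (hB : IsCompactConvexLinear B) (l : StrongDual ℝ W) :
    IsCompactConvexLinear fun z => l.toExposed (B z) where
  nonempty z := by
    obtain ⟨w, hw, hmax⟩ :=
      (hB.isCompact z).exists_isMaxOn (hB.nonempty z) l.continuous.continuousOn
    exact ⟨w, hw, fun v hv => hmax hv⟩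
  isCompact z := ContinuousLinearMap.toExposed.isExposed.isCompact (hB.isCompact z)
  convex z := ContinuousLinearMap.toExposed.isExposed.convex (hB.convex z)
  add u v := by rw [← l.toExposed_add, hB.add]
  smul c hc u := by rw [hB.smul c hc, l.toExposed_smul (NNReal.coe_pos.2 hc)]

section ContinuousAdd

variable [ContinuousAdd W]

theorem iInter {ι : Type*} [Nonempty ι] {B : ι → S → Set W} (hd : Directed (· ≥ ·) B)
    (hB : ∀ i, IsCompactConvexLinear (B i)) : IsCompactConvexLinear fun z => ⋂ i, B i z where
  nonempty z := IsCompact.nonempty_iInter_of_directed_nonempty_isCompact_isClosed _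
    (hd.mono_comp (· ≥ ·) (g := fun C : S → Set W => C z) fun _ _ h => h z)
    (fun i => (hB i).nonempty z) (fun i => (hB i).isCompact z)
    fun i => ((hB i).isCompact z).isClosed
  isCompact z := ((hB (Classical.arbitrary ι)).isCompact z).of_isClosed_subset
    (isClosed_iInter fun i => ((hB i).isCompact z).isClosed) (iInter_subset _ _)
  convex z := convex_iInter fun i => (hB i).convex z
  add u v := by
    have hd' : Directed (· ⊇ ·) fun i => B i u ×ˢ B i v :=
      hd.mono_comp (· ≥ ·) (g := fun C : S → Set W => C u ×ˢ C v) fun _ _ h => prod_mono (h u) (h v)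
    rw [← iInter_congr fun i => (hB i).add u v]
    exact iInter_add_iInter_of_directed hd' (fun i => (hB i).isCompact u)
      fun i => (hB i).isCompact v
  smul c hc u := by
    rw [smul_set_iInter₀ (NNReal.coe_ne_zero.2 hc.ne')]
    exact iInter_congr fun i => (hB i).smul c hc u

theorem exists_minimal_le (hB : IsCompactConvexLinear B) :
    ∃ M ≤ B, Minimal IsCompactConvexLinear M := by
  obtain ⟨M, hMB, hM⟩ := zorn_le_nonempty₀
    {C : (S → Set W)ᵒᵈ | IsCompactConvexLinear (OrderDual.ofDual C)}
    (fun c hc hchain C hC =>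
      have : Nonempty c := ⟨⟨C, hC⟩⟩
      ⟨OrderDual.toDual fun z => ⋂ D : c, OrderDual.ofDual D.1 z,
        iInter hchain.directedOn.directed_val fun D => hc D.2,
        fun D hD z => iInter_subset _ (⟨D, hD⟩ : c)⟩)
    (OrderDual.toDual B) hB
  exact ⟨OrderDual.ofDual M, hMB, maximal_toDual.1 hM⟩

end ContinuousAdd

variable [IsTopologicalAddGroup W] [ContinuousSMul ℝ W] [LocallyConvexSpace ℝ W]

theorem subsingleton_of_minimal (hB : Minimal IsCompactConvexLinear B) (z : S) :
    (B z).Subsingleton := by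
  intro w₁ hw₁ w₂ hw₂
  by_contra hne
  obtain ⟨l, hl⟩ := geometric_hahn_banach_point_point hne
  have hface : B ≤ fun z => l.toExposed (B z) :=
    hB.le_of_le (hB.prop.toExposed l) fun _ => ContinuousLinearMap.toExposed.isExposed.subset
  exact (hface z hw₁).2 w₂ hw₂ |>.not_gt hl

theorem exists_isLinearSelection (hB : IsCompactConvexLinear B) :
    ∃ a, IsLinearSelection B a := by
  obtain ⟨M, hMB, hM⟩ := hB.exists_minimal_le
  choose a ha using hM.prop.nonempty
  refine ⟨a, ⟨fun z => hMB z (ha z), fun u v => ?_, fun c hc u => ?_⟩⟩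
  · refine subsingleton_of_minimal hM _ (ha _) ?_
    rw [← hM.prop.add]
    exact add_mem_add (ha u) (ha v)
  · refine subsingleton_of_minimal hM _ (ha _) ?_
    rw [hM.prop.smul c hc]
    exact smul_mem_smul_set (ha u)

theorem exists_isLinearSelection_apply_eq
    (hB : IsCompactConvexLinear B) {x : S} {y : W} (hy : y ∈ B x) :
    ∃ a, IsLinearSelection B a ∧ a x = y := by
  set V := (fun a : S → W => a x) '' {a | IsLinearSelection B a}
  have hV : IsCompact V :=
    (isCompact_setOf_isLinearSelection hB.isCompact).image (continuous_apply x)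
  have hVconv : Convex ℝ V :=
    (convex_setOf_isLinearSelection hB.convex).linear_image (LinearMap.proj x)
  by_contra! hyV
  obtain ⟨l, r, hlV, hly⟩ := geometric_hahn_banach_closed_point hVconv hV.isClosed
    fun ⟨a, ha, hax⟩ => hyV a ha hax
  -- a linear selection of the face of `B` exposed by `l` maximizes `l` over `B x` at `x`
  obtain ⟨a, ha⟩ := (hB.toExposed l).exists_isLinearSelection
  have hax : a x ∈ V := ⟨a, ⟨fun z => (ha.mem z).1, ha.map_add, ha.map_smul⟩, rfl⟩
  exact (hlV _ hax).not_ge <| hly.le.trans ((ha.mem x).2 y hy)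

end IsCompactConvexLinear

end SetValued

/-- Every linear set-valued map from an `ℝ≥0`-module into nonempty compact convex
subsets of a Hausdorff locally convex real TVS admits a linear selection through
any prescribed point of its graph. -/
theorem stmt1 {S W : Type*} [AddCommMonoid S] [Module ℝ≥0 S]
    [AddCommGroup W] [Module ℝ W] [TopologicalSpace W] [IsTopologicalAddGroup W]
    [ContinuousSMul ℝ W] [T2Space W] [LocallyConvexSpace ℝ W]
    (A : S → Set W)
    (hA : ∀ z, (A z).Nonempty ∧ IsCompact (A z) ∧ Convex ℝ (A z))
    (hadd : ∀ x y, A x + A y = A (x + y))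
    (hhom : ∀ c : ℝ≥0, 0 < c → ∀ x, A (c • x) = (c : ℝ) • A x)
    (x : S) (y : W) (hy : y ∈ A x) :
    ∃ a : S → W, (∀ z, a z ∈ A z) ∧ (∀ u v, a (u + v) = a u + a v) ∧
      (∀ c : ℝ≥0, 0 < c → ∀ u, a (c • u) = (c : ℝ) • a u) ∧ a x = y := by
  have hA' : IsCompactConvexLinear A :=
    ⟨fun z => (hA z).1, fun z => (hA z).2.1, fun z => (hA z).2.2, hadd, hhom⟩
  obtain ⟨a, ha, hax⟩ := hA'.exists_isLinearSelection_apply_eq hy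
  exact ⟨a, ha.mem, ha.map_add, ha.map_smul, hax⟩
end

section
/- Let S and W be real vector spaces, let K ⊆ S be a nonempty convex set, and let T assign to each x ∈ K a nonempty convex subset T(x) ⊆ W. Then: (1) T is affine if and only if T_sus is additive, i.e. T_sus(u) + T_sus(v) = T_sus(u + v) (Minkowski sum) for all u, v ∈ K_sus; (2) T is convex if and only if T_sus is superadditive, i.e. T_sus(u) + T_sus(v) ⊆ T_sus(u + v) for all u, v ∈ K_sus. (T_sus is automatically positively homogeneous.) -/
open scoped Pointwise

/-! Writing `u = (a, a • x)` and `v = (b, b • y)`, one has `u + v = (a + b, (a + b) • z)` with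
`z = (1 - θ) • x + θ • y` and `θ = b / (a + b)`, and likewise
`a • T x + b • T y = (a + b) • ((1 - θ) • T x + θ • T y)`. So, up to the factor `a + b`, the
(super)additivity of `T_sus` at `u, v` is the affinity (convexity) relation of `T` at `x, y, θ`;
conversely, taking `a = 1 - θ` and `b = θ` gives `a + b = 1`. -/

def suspension {S : Type*} [AddCommGroup S] [Module ℝ S] (K : Set S) : Set (ℝ × S) :=
  {p : ℝ × S | ∃ l : ℝ, 0 < l ∧ ∃ x ∈ K, p = (l, l • x)}

lemma add_smul_convexCombo_eq {M : Type*} [AddMonoid M] [DistribMulAction ℝ M] {a b : ℝ}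
    (hab : 0 < a + b) (x y : M) :
    (a + b) • ((1 - b / (a + b)) • x + (b / (a + b)) • y) = a • x + b • y := by
  have ha : (a + b) * (1 - b / (a + b)) = a := by field_simp; ring
  have hb : (a + b) * (b / (a + b)) = b := by field_simp
  rw [smul_add, smul_smul, smul_smul, ha, hb]

lemma mk_add_mk_eq_convexCombo {S : Type*} [AddCommGroup S] [Module ℝ S] {a b : ℝ}
    (hab : 0 < a + b) (x y : S) :
    ((a, a • x) + (b, b • y) : ℝ × S) =
      (a + b, (a + b) • ((1 - b / (a + b)) • x + (b / (a + b)) • y)) := by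
  rw [Prod.mk_add_mk, add_smul_convexCombo_eq hab]

theorem forall_convexCombo_iff_forall_suspension {S W : Type*} [AddCommGroup S] [Module ℝ S]
    [AddMonoid W] [DistribMulAction ℝ W] {K : Set S} (hK : Convex ℝ K)
    {T : S → Set W} {Tsus : ℝ × S → Set W}
    (hTsus : ∀ l : ℝ, 0 < l → ∀ x ∈ K, Tsus (l, l • x) = l • T x)
    (r : Set W → Set W → Prop) (hr : ∀ (c : ℝ) (A B : Set W), r A B → r (c • A) (c • B)) :
    (∀ x ∈ K, ∀ y ∈ K, ∀ θ : ℝ, 0 < θ → θ < 1 →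
        r ((1 - θ) • T x + θ • T y) (T ((1 - θ) • x + θ • y))) ↔
      ∀ u ∈ suspension K, ∀ v ∈ suspension K, r (Tsus u + Tsus v) (Tsus (u + v)) := by
  constructor
  · rintro h u ⟨a, ha, x, hx, rfl⟩ v ⟨b, hb, y, hy, rfl⟩
    have hab : 0 < a + b := add_pos ha hb
    have hθ0 : 0 < b / (a + b) := div_pos hb hab
    have hθ1 : b / (a + b) < 1 := (div_lt_one hab).2 (by linarith)
    have hz : (1 - b / (a + b)) • x + (b / (a + b)) • y ∈ K :=
      hK hx hy (by linarith) hθ0.le (by ring)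
    rw [hTsus a ha x hx, hTsus b hb y hy, mk_add_mk_eq_convexCombo hab, hTsus _ hab _ hz,
      ← add_smul_convexCombo_eq hab]
    exact hr _ _ _ (h x hx y hy _ hθ0 hθ1)
  · intro h x hx y hy θ hθ0 hθ1
    have h1θ : 0 < 1 - θ := by linarith
    have hz : (1 - θ) • x + θ • y ∈ K := hK hx hy h1θ.le hθ0.le (by ring)
    have key := h _ ⟨1 - θ, h1θ, x, hx, rfl⟩ _ ⟨θ, hθ0, y, hy, rfl⟩
    have hsum : ((1 - θ, (1 - θ) • x) + (θ, θ • y) : ℝ × S) =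
        (1, (1 : ℝ) • ((1 - θ) • x + θ • y)) := by
      rw [Prod.mk_add_mk, one_smul, sub_add_cancel]
    rwa [hTsus _ h1θ x hx, hTsus _ hθ0 y hy, hsum, hTsus 1 one_pos _ hz, one_smul] at key

theorem stmt4_general {S W : Type*} [AddCommGroup S] [Module ℝ S]
    [AddCommGroup W] [Module ℝ W]
    (K : Set S) (hKconv : Convex ℝ K)
    (T : S → Set W)
    (Tsus : ℝ × S → Set W)
    (hTsus : ∀ l : ℝ, 0 < l → ∀ x ∈ K, Tsus (l, l • x) = l • T x) :
    ((∀ x ∈ K, ∀ y ∈ K, ∀ θ : ℝ, 0 < θ → θ < 1 →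
        (1 - θ) • T x + θ • T y = T ((1 - θ) • x + θ • y)) ↔
      (∀ u ∈ {p : ℝ × S | ∃ l : ℝ, 0 < l ∧ ∃ x ∈ K, p = (l, l • x)},
        ∀ v ∈ {p : ℝ × S | ∃ l : ℝ, 0 < l ∧ ∃ x ∈ K, p = (l, l • x)},
          Tsus u + Tsus v = Tsus (u + v))) ∧
    ((∀ x ∈ K, ∀ y ∈ K, ∀ θ : ℝ, 0 < θ → θ < 1 →
        (1 - θ) • T x + θ • T y ⊆ T ((1 - θ) • x + θ • y)) ↔
      (∀ u ∈ {p : ℝ × S | ∃ l : ℝ, 0 < l ∧ ∃ x ∈ K, p = (l, l • x)},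
        ∀ v ∈ {p : ℝ × S | ∃ l : ℝ, 0 < l ∧ ∃ x ∈ K, p = (l, l • x)},
          Tsus u + Tsus v ⊆ Tsus (u + v))) :=
  ⟨forall_convexCombo_iff_forall_suspension hKconv hTsus (· = ·)
      fun c _ _ hAB => congrArg (c • ·) hAB,
    forall_convexCombo_iff_forall_suspension hKconv hTsus (· ⊆ ·)
      fun _ _ _ hAB => Set.smul_set_mono hAB⟩

/-- A set-valued map `T` on a convex set `K` is affine (resp. convex) iff its
natural extension `T_sus` to the suspension cone
`K_sus = {(λ, λ • x) : λ > 0, x ∈ K}` is additive (resp. superadditive). -/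
theorem stmt4 {S W : Type*} [AddCommGroup S] [Module ℝ S]
    [AddCommGroup W] [Module ℝ W]
    (K : Set S) (hKne : K.Nonempty) (hKconv : Convex ℝ K)
    (T : S → Set W)
    (hTne : ∀ x ∈ K, (T x).Nonempty) (hTconv : ∀ x ∈ K, Convex ℝ (T x))
    (Tsus : ℝ × S → Set W)
    (hTsus : ∀ l : ℝ, 0 < l → ∀ x ∈ K, Tsus (l, l • x) = l • T x) :
    ((∀ x ∈ K, ∀ y ∈ K, ∀ θ : ℝ, 0 < θ → θ < 1 →
        (1 - θ) • T x + θ • T y = T ((1 - θ) • x + θ • y)) ↔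
      (∀ u ∈ {p : ℝ × S | ∃ l : ℝ, 0 < l ∧ ∃ x ∈ K, p = (l, l • x)},
        ∀ v ∈ {p : ℝ × S | ∃ l : ℝ, 0 < l ∧ ∃ x ∈ K, p = (l, l • x)},
          Tsus u + Tsus v = Tsus (u + v))) ∧
    ((∀ x ∈ K, ∀ y ∈ K, ∀ θ : ℝ, 0 < θ → θ < 1 →
        (1 - θ) • T x + θ • T y ⊆ T ((1 - θ) • x + θ • y)) ↔
      (∀ u ∈ {p : ℝ × S | ∃ l : ℝ, 0 < l ∧ ∃ x ∈ K, p = (l, l • x)},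
        ∀ v ∈ {p : ℝ × S | ∃ l : ℝ, 0 < l ∧ ∃ x ∈ K, p = (l, l • x)},
          Tsus u + Tsus v ⊆ Tsus (u + v))) :=
  stmt4_general K hKconv T Tsus hTsus
end

section
/- Let K be a nonempty compact convex subset of a Hausdorff locally convex real topological vector space E, and let C = {(λ, λ • x) : λ > 0, x ∈ K} ∪ {0} ⊆ ℝ × E, partially ordered by u ≤ v iff v − u ∈ C. The following are equivalent: (1) C is a lattice, i.e. every pair of elements of C has a least upper bound and a greatest lower bound in C with respect to this order (that is, K is a Choquet simplex); (2) C has the Riesz decomposition property: for all u, v, w ∈ C with w ≤ u + v there exist w₁, w₂ ∈ C with w = w₁ + w₂, w₁ ≤ u, w₂ ≤ v; (3) every convex set-valued map T assigning to each x ∈ K a nonempty compact convex subset of ℝ admits an affine selection. -/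
/-!
The cone `C` over `K` is closed and its order intervals `[0, c]` are compact, because `K` is
compact. Lattice ⇒ Riesz is algebra. Conversely, Riesz interpolation makes the upper bounds of
`u, v` lying below `u + v` a downward directed compact set, whose least element is the supremum;
infima are obtained the same way.

Affine selections of convex set-valued maps are the same as affine functions squeezed between a
convex `m` and a concave `M ≥ m` (take `T x = [m x, M x]`, resp. `m = inf T`, `M = sup T`). Given
Riesz decomposition, the perspectives `m̃`, `M̃` of `m`, `M` are sub- and superadditive on `C`, and
the supremum of `∑ m̃ pᵢ` over all decompositions `c = ∑ pᵢ` in `C` is additive by Riesz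
refinement: on `{1} × K` it is an affine function between `m` and `M`. Conversely, if `w ≤ u + v`
is not in `[0, u] + [0, v]`, separate it from this compact convex set by a functional `f`. The
perspective `φ` of an affine function between `max 0 (f (1, ·))` and `x ↦ max f [0, (1, x)]` is
additive, so `f w ≤ φ w ≤ φ (u + v) = φ u + φ v ≤ max f [0, u] + max f [0, v] < f w`.
-/

open Set

open scoped Pointwise

section OrderCone

variable {G : Type*} [AddCommGroup G]

def orderInterval (P : Set G) (c : G) : Set G := {p | p ∈ P ∧ c - p ∈ P}

def IsLatticeCone (P : Set G) : Prop :=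
  ∀ u ∈ P, ∀ v ∈ P,
    (∃ s ∈ P, (s - u ∈ P ∧ s - v ∈ P) ∧ ∀ t ∈ P, t - u ∈ P → t - v ∈ P → t - s ∈ P) ∧
    (∃ i ∈ P, (u - i ∈ P ∧ v - i ∈ P) ∧ ∀ t ∈ P, u - t ∈ P → v - t ∈ P → i - t ∈ P)

def HasRieszDecomposition (P : Set G) : Prop :=
  ∀ u ∈ P, ∀ v ∈ P, ∀ w ∈ P, u + v - w ∈ P →
    ∃ w₁ ∈ P, ∃ w₂ ∈ P, w = w₁ + w₂ ∧ u - w₁ ∈ P ∧ v - w₂ ∈ P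

variable {S : Type*} [SetLike S G] [AddSubmonoidClass S G] {P : S}

theorem zero_mem_orderInterval {c : G} (hc : c ∈ P) : 0 ∈ orderInterval (P : Set G) c :=
  ⟨zero_mem P, by simpa using hc⟩

theorem self_mem_orderInterval {c : G} (hc : c ∈ P) : c ∈ orderInterval (P : Set G) c :=
  ⟨hc, by simp⟩

theorem IsLatticeCone.hasRieszDecomposition (hP : IsLatticeCone (P : Set G)) :
    HasRieszDecomposition (P : Set G) := by
  intro u hu v hv w hw hwuv
  obtain ⟨-, i, hi, ⟨hwi, hui⟩, hi_max⟩ := hP w hw u hu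
  obtain ⟨-, j, -, ⟨hwvj, huvj⟩, hj_max⟩ :=
    hP (w + v) (add_mem hw hv) (u + v) (add_mem hu hv)
  have hjw : j - w ∈ P := hj_max w hw (by simpa using hv) hwuv
  have hjv : j - v ∈ P := hj_max v hv (by simpa using hw) (by simpa using hu)
  have hij : i - (j - v) ∈ P :=
    hi_max _ hjv (by rw [sub_sub_eq_add_sub]; exact hwvj) (by rw [sub_sub_eq_add_sub]; exact huvj)
  -- `w ≤ (w + v) ⊓ (u + v) ≤ (w ⊓ u) + v`
  refine ⟨i, hi, w - i, hwi, by abel, hui, ?_⟩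
  rw [show v - (w - i) = i - (j - v) + (j - w) by abel]
  exact add_mem hij hjw

theorem HasRieszDecomposition.exists_between (hP : HasRieszDecomposition (P : Set G))
    {a₁ a₂ b₁ b₂ : G} (ha₁ : a₁ ∈ P) (h₁₁ : b₁ - a₁ ∈ P) (h₁₂ : b₁ - a₂ ∈ P)
    (h₂₁ : b₂ - a₁ ∈ P) (h₂₂ : b₂ - a₂ ∈ P) :
    ∃ c ∈ P, c - a₁ ∈ P ∧ c - a₂ ∈ P ∧ b₁ - c ∈ P ∧ b₂ - c ∈ P := by
  obtain ⟨w₁, hw₁, w₂, hw₂, hw, h₁, h₂⟩ :=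
    hP _ h₁₂ _ h₂₁ _ h₁₁ (by rwa [show b₁ - a₂ + (b₂ - a₁) - (b₁ - a₁) = b₂ - a₂ by abel])
  have hb₁ : b₁ = a₁ + w₁ + w₂ := by rw [add_assoc, ← hw]; abel
  refine ⟨a₁ + w₂, add_mem ha₁ hw₂, by simpa using hw₂, ?_, ?_, ?_⟩
  · rwa [show a₁ + w₂ - a₂ = b₁ - a₂ - w₁ by rw [hb₁]; abel]
  · rwa [show b₁ - (a₁ + w₂) = w₁ by rw [hb₁]; abel]
  · rwa [show b₂ - (a₁ + w₂) = b₂ - a₁ - w₂ by abel]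

theorem IsCompact.exists_forall_rel_of_directedOn {X : Type*} [TopologicalSpace X]
    {r : X → X → Prop} (hr : ∀ {a b c}, r a b → r b c → r a c)
    (hr_closed : ∀ t, IsClosed {s | r s t})
    {U : Set X} (hU : IsCompact U) (hne : U.Nonempty) (hdir : DirectedOn (flip r) U) :
    ∃ s ∈ U, ∀ t ∈ U, r s t := by
  have : Nonempty U := hne.to_subtype
  by_contra! h
  obtain ⟨t, ht⟩ := hU.elim_directed_family_closed (fun t : U => {s | r s t})
    (fun t => hr_closed t) (by ext s; simpa using h s)
    (fun t₁ t₂ => by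
      obtain ⟨c, hc, hc₁, hc₂⟩ := hdir t₁ t₁.2 t₂ t₂.2
      exact ⟨⟨c, hc⟩, fun s hs => hr hs hc₁, fun s hs => hr hs hc₂⟩)
  obtain ⟨c, hc, hct, -⟩ := hdir t t.2 t t.2
  exact ht.subset ⟨hc, hct⟩

section Topology

variable [TopologicalSpace G] [ContinuousSub G]

theorem HasRieszDecomposition.exists_sup (hP : HasRieszDecomposition (P : Set G))
    (hclosed : IsClosed (P : Set G)) (hcompact : ∀ c, IsCompact (orderInterval (P : Set G) c))
    {u v : G} (hu : u ∈ P) (hv : v ∈ P) :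
    ∃ s ∈ P, (s - u ∈ P ∧ s - v ∈ P) ∧ ∀ t ∈ P, t - u ∈ P → t - v ∈ P → t - s ∈ P := by
  let U := orderInterval (P : Set G) (u + v) ∩ {t | t - u ∈ P ∧ t - v ∈ P}
  have hU_of_le {t c : G} (ht : t ∈ orderInterval (P : Set G) (u + v)) (hc : c ∈ P)
      (hcu : c - u ∈ P) (hcv : c - v ∈ P) (htc : t - c ∈ P) : c ∈ U :=
    ⟨⟨hc, by simpa using add_mem ht.2 htc⟩, hcu, hcv⟩
  have huvU : u + v ∈ U := ⟨self_mem_orderInterval (add_mem hu hv), by simpa, by simpa⟩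
  have hU : IsCompact U := (hcompact _).inter_right <|
    (hclosed.preimage (continuous_id.sub continuous_const)).inter
      (hclosed.preimage (continuous_id.sub continuous_const))
  obtain ⟨s, ⟨⟨hs, -⟩, hsu, hsv⟩, hs_min⟩ :=
    hU.exists_forall_rel_of_directedOn (r := fun s t => t - s ∈ P)
      (fun hab hbc => by simpa using add_mem hbc hab)
      (fun t => hclosed.preimage (continuous_const.sub continuous_id)) ⟨_, huvU⟩
      fun t₁ ht₁ t₂ ht₂ => by
        obtain ⟨c, hc, hcu, hcv, ht₁c, ht₂c⟩ :=
          hP.exists_between hu ht₁.2.1 ht₁.2.2 ht₂.2.1 ht₂.2.2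
        exact ⟨c, hU_of_le ht₁.1 hc hcu hcv ht₁c, ht₁c, ht₂c⟩
  refine ⟨s, hs, ⟨hsu, hsv⟩, fun t ht htu htv => ?_⟩
  obtain ⟨c, hc, hcu, hcv, htc, huvc⟩ := hP.exists_between hu htu htv huvU.2.1 huvU.2.2
  simpa using add_mem htc (hs_min c (hU_of_le huvU.1 hc hcu hcv huvc))

theorem HasRieszDecomposition.exists_inf (hP : HasRieszDecomposition (P : Set G))
    (hclosed : IsClosed (P : Set G)) (hcompact : ∀ c, IsCompact (orderInterval (P : Set G) c))
    {u v : G} (hu : u ∈ P) (hv : v ∈ P) :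
    ∃ i ∈ P, (u - i ∈ P ∧ v - i ∈ P) ∧ ∀ t ∈ P, u - t ∈ P → v - t ∈ P → i - t ∈ P := by
  let L := orderInterval (P : Set G) u ∩ {t | v - t ∈ P}
  have hL : IsCompact L :=
    (hcompact u).inter_right (hclosed.preimage (continuous_const.sub continuous_id))
  obtain ⟨i, ⟨⟨hi, hui⟩, hvi⟩, hi_max⟩ :=
    hL.exists_forall_rel_of_directedOn (r := fun s t => s - t ∈ P)
      (fun hab hbc => by simpa using add_mem hab hbc)
      (fun t => hclosed.preimage (continuous_id.sub continuous_const))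
      ⟨0, zero_mem_orderInterval hu, by simpa⟩ fun p₁ hp₁ p₂ hp₂ => by
        obtain ⟨c, hc, hcp₁, hcp₂, huc, hvc⟩ :=
          hP.exists_between hp₁.1.1 hp₁.1.2 hp₂.1.2 hp₁.2 hp₂.2
        exact ⟨c, ⟨⟨hc, huc⟩, hvc⟩, hcp₁, hcp₂⟩
  exact ⟨i, hi, ⟨hui, hvi⟩, fun t ht hut hvt => hi_max t ⟨⟨ht, hut⟩, hvt⟩⟩

theorem HasRieszDecomposition.isLatticeCone (hP : HasRieszDecomposition (P : Set G))
    (hclosed : IsClosed (P : Set G)) (hcompact : ∀ c, IsCompact (orderInterval (P : Set G) c)) :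
    IsLatticeCone (P : Set G) := fun _ hu _ hv =>
  ⟨hP.exists_sup hclosed hcompact hu hv, hP.exists_inf hclosed hcompact hu hv⟩

end Topology

end OrderCone

section ConeOver

variable {E : Type*} [AddCommGroup E] [Module ℝ E] {K : Set E}

def coneOver (K : Set E) : Set (ℝ × E) :=
  {p | ∃ l : ℝ, 0 < l ∧ ∃ x ∈ K, p = (l, l • x)} ∪ {0}

theorem mem_coneOver_iff {p : ℝ × E} :
    p ∈ coneOver K ↔ p = 0 ∨ ∃ t : ℝ, 0 < t ∧ ∃ x ∈ K, p = t • ((1 : ℝ), x) := by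
  simp [coneOver, Prod.smul_mk]

theorem zero_mem_coneOver : (0 : ℝ × E) ∈ coneOver K := mem_coneOver_iff.2 (.inl rfl)

theorem smul_mk_one_mem_coneOver {t : ℝ} (ht : 0 ≤ t) {x : E} (hx : x ∈ K) :
    t • ((1 : ℝ), x) ∈ coneOver K := by
  rcases ht.eq_or_lt with rfl | ht
  · simpa using zero_mem_coneOver
  · exact mem_coneOver_iff.2 (.inr ⟨t, ht, x, hx, rfl⟩)

theorem smul_mem_coneOver {t : ℝ} (ht : 0 ≤ t) {p : ℝ × E} (hp : p ∈ coneOver K) :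
    t • p ∈ coneOver K := by
  obtain rfl | ⟨s, hs, x, hx, rfl⟩ := mem_coneOver_iff.1 hp
  · simpa using zero_mem_coneOver
  · simpa [smul_smul] using smul_mk_one_mem_coneOver (mul_nonneg ht hs.le) hx

theorem mk_one_mem_coneOver {x : E} (hx : x ∈ K) : ((1 : ℝ), x) ∈ coneOver K := by
  simpa using smul_mk_one_mem_coneOver zero_le_one hx

theorem fst_nonneg_of_mem_coneOver {p : ℝ × E} (hp : p ∈ coneOver K) : 0 ≤ p.1 := by
  obtain rfl | ⟨t, ht, x, -, rfl⟩ := mem_coneOver_iff.1 hp <;> simp [*, le_of_lt]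

theorem smul_mk_one_add_smul_mk_one {t s : ℝ} (h : t + s ≠ 0) (x y : E) :
    t • ((1 : ℝ), x) + s • ((1 : ℝ), y) =
      (t + s) • ((1 : ℝ), (t / (t + s)) • x + (s / (t + s)) • y) := by
  ext
  · simp
  · simp [smul_add, smul_smul, mul_div_cancel₀ _ h]

theorem mk_one_smul_add_smul {a b : ℝ} (hab : a + b = 1) (x y : E) :
    ((1 : ℝ), a • x + b • y) = a • ((1 : ℝ), x) + b • ((1 : ℝ), y) := by
  ext <;> simp [hab]

theorem Convex.add_mem_coneOver (hK : Convex ℝ K) {p q : ℝ × E} (hp : p ∈ coneOver K)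
    (hq : q ∈ coneOver K) : p + q ∈ coneOver K := by
  obtain rfl | ⟨t, ht, x, hx, rfl⟩ := mem_coneOver_iff.1 hp
  · simpa using hq
  obtain rfl | ⟨s, hs, y, hy, rfl⟩ := mem_coneOver_iff.1 hq
  · simpa using hp
  rw [smul_mk_one_add_smul_mk_one (by positivity)]
  exact smul_mk_one_mem_coneOver (by positivity)
    (hK hx hy (by positivity) (by positivity) (by field_simp))

theorem coneOver_inter_fst_le (hKne : K.Nonempty) (Λ : ℝ) :
    coneOver K ∩ {p | p.1 ≤ Λ} =
      (fun q : ℝ × E => q.1 • ((1 : ℝ), q.2)) '' (Icc 0 Λ ×ˢ K) := by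
  ext p
  constructor
  · rintro ⟨hp, hpΛ⟩
    obtain rfl | ⟨t, ht, x, hx, rfl⟩ := mem_coneOver_iff.1 hp
    · obtain ⟨x, hx⟩ := hKne
      exact ⟨(0, x), ⟨⟨le_rfl, by simpa using hpΛ⟩, hx⟩, by simp⟩
    · exact ⟨(t, x), ⟨⟨ht.le, by simpa using hpΛ⟩, hx⟩, rfl⟩
  · rintro ⟨⟨t, x⟩, ⟨⟨ht, htΛ⟩, hx⟩, rfl⟩
    exact ⟨smul_mk_one_mem_coneOver ht hx, by simpa using htΛ⟩

def Convex.pointedConeOver (hK : Convex ℝ K) : PointedCone ℝ (ℝ × E) where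
  carrier := coneOver K
  add_mem' := hK.add_mem_coneOver
  zero_mem' := zero_mem_coneOver
  smul_mem' c _ hp := smul_mem_coneOver c.2 hp

end ConeOver

section OrderIntervalCone

variable {V : Type*} [AddCommGroup V] [Module ℝ V] (P : PointedCone ℝ V)

theorem smul_mem_orderInterval {a : ℝ} (ha : 0 ≤ a) {p c : V}
    (hp : p ∈ orderInterval (P : Set V) c) : a • p ∈ orderInterval (P : Set V) (a • c) :=
  ⟨P.smul_mem ha hp.1, by simpa [smul_sub] using P.smul_mem ha hp.2⟩

theorem add_mem_orderInterval {p q c d : V} (hp : p ∈ orderInterval (P : Set V) c)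
    (hq : q ∈ orderInterval (P : Set V) d) : p + q ∈ orderInterval (P : Set V) (c + d) :=
  ⟨P.add_mem hp.1 hq.1, by simpa [add_sub_add_comm] using P.add_mem hp.2 hq.2⟩

theorem convex_orderInterval (c : V) : Convex ℝ (orderInterval (P : Set V) c) := by
  intro p hp q hq a b ha hb hab
  simpa [← add_smul, hab] using
    add_mem_orderInterval P (smul_mem_orderInterval P ha hp) (smul_mem_orderInterval P hb hq)

end OrderIntervalCone

section ConeOverTopology

variable {E : Type*} [AddCommGroup E] [Module ℝ E] [TopologicalSpace E] [ContinuousSMul ℝ E]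
  {K : Set E}

theorem isCompact_coneOver_inter_fst_le (hKne : K.Nonempty) (hKcomp : IsCompact K) (Λ : ℝ) :
    IsCompact (coneOver K ∩ {p | p.1 ≤ Λ}) := by
  rw [coneOver_inter_fst_le hKne]
  exact (isCompact_Icc.prod hKcomp).image (by fun_prop)

variable [T2Space E]

theorem isClosed_coneOver (hKne : K.Nonempty) (hKcomp : IsCompact K) :
    IsClosed (coneOver K) := by
  refine isClosed_of_closure_subset fun p hp => ?_
  have hopen : IsOpen {q : ℝ × E | q.1 < p.1 + 1} := isOpen_lt continuous_fst continuous_const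
  have hp' := hopen.inter_closure ⟨lt_add_one p.1, hp⟩
  have hcomp := isCompact_coneOver_inter_fst_le hKne hKcomp (p.1 + 1)
  exact (hcomp.isClosed.closure_subset_iff.2
    (fun q hq => ⟨hq.2, (show q.1 < p.1 + 1 from hq.1).le⟩) hp').1

theorem isCompact_orderInterval_coneOver [IsTopologicalAddGroup E] (hKne : K.Nonempty)
    (hKcomp : IsCompact K) (c : ℝ × E) :
    IsCompact (orderInterval (coneOver K) c) := by
  have hC := isClosed_coneOver hKne hKcomp
  refine (isCompact_coneOver_inter_fst_le hKne hKcomp c.1).of_isClosed_subset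
    (hC.inter (hC.preimage (continuous_const.sub continuous_id))) fun p hp => ⟨hp.1, ?_⟩
  simpa using fst_nonneg_of_mem_coneOver hp.2

end ConeOverTopology

section Perspective

variable {E : Type*} [AddCommGroup E] [Module ℝ E] {K : Set E}

noncomputable def perspective (f : E → ℝ) (p : ℝ × E) : ℝ := p.1 * f (p.1⁻¹ • p.2)

@[simp]
theorem perspective_zero (f : E → ℝ) : perspective f 0 = 0 := by simp [perspective]

theorem perspective_smul (f : E → ℝ) {t : ℝ} (ht : t ≠ 0) (p : ℝ × E) :
    perspective f (t • p) = t * perspective f p := by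
  rcases eq_or_ne p.1 0 with hp | hp
  · simp [perspective, hp]
  · simp only [perspective, Prod.smul_fst, Prod.smul_snd, smul_eq_mul, smul_smul, mul_inv_rev,
      mul_assoc, inv_mul_cancel₀ ht, mul_one]

theorem perspective_smul_mk_one (f : E → ℝ) (t : ℝ) (x : E) :
    perspective f (t • ((1 : ℝ), x)) = t * f x := by
  rcases eq_or_ne t 0 with rfl | ht
  · simp
  · simp [perspective, smul_smul, inv_mul_cancel₀ ht]

theorem perspective_neg (f : E → ℝ) (p : ℝ × E) : perspective (-f) p = -perspective f p := by
  simp [perspective]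

theorem perspective_le_perspective {f g : E → ℝ} (hfg : ∀ x ∈ K, f x ≤ g x) {p : ℝ × E}
    (hp : p ∈ coneOver K) : perspective f p ≤ perspective g p := by
  obtain rfl | ⟨t, ht, x, hx, rfl⟩ := mem_coneOver_iff.1 hp
  · simp
  · rw [perspective_smul_mk_one, perspective_smul_mk_one]
    exact mul_le_mul_of_nonneg_left (hfg x hx) ht.le

theorem ConvexOn.perspective_add_le {f : E → ℝ} (hf : ConvexOn ℝ K f) {p q : ℝ × E}
    (hp : p ∈ coneOver K) (hq : q ∈ coneOver K) :
    perspective f (p + q) ≤ perspective f p + perspective f q := by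
  obtain rfl | ⟨t, ht, x, hx, rfl⟩ := mem_coneOver_iff.1 hp
  · simp
  obtain rfl | ⟨s, hs, y, hy, rfl⟩ := mem_coneOver_iff.1 hq
  · simp
  have hts : 0 < t + s := by positivity
  rw [smul_mk_one_add_smul_mk_one hts.ne', perspective_smul_mk_one, perspective_smul_mk_one,
    perspective_smul_mk_one]
  calc (t + s) * f ((t / (t + s)) • x + (s / (t + s)) • y)
      ≤ (t + s) * ((t / (t + s)) * f x + (s / (t + s)) * f y) :=
        mul_le_mul_of_nonneg_left (hf.2 hx hy (by positivity) (by positivity) (by field_simp))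
          hts.le
    _ = t * f x + s * f y := by field_simp

theorem ConcaveOn.perspective_add_ge {f : E → ℝ} (hf : ConcaveOn ℝ K f) {p q : ℝ × E}
    (hp : p ∈ coneOver K) (hq : q ∈ coneOver K) :
    perspective f p + perspective f q ≤ perspective f (p + q) := by
  have := (neg_convexOn_iff.2 hf).perspective_add_le hp hq
  simp only [perspective_neg] at this
  linarith

theorem perspective_max_zero_apply_mk_one (f : ℝ × E →ₗ[ℝ] ℝ) {p : ℝ × E}
    (hp : p ∈ coneOver K) : perspective (fun x => max 0 (f (1, x))) p = max 0 (f p) := by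
  obtain rfl | ⟨t, ht, x, -, rfl⟩ := mem_coneOver_iff.1 hp
  · simp
  · rw [perspective_smul_mk_one, map_smul, smul_eq_mul, mul_max_of_nonneg _ _ ht.le, mul_zero]

theorem convexOn_max_zero_apply_mk_one (hK : Convex ℝ K) (f : ℝ × E →ₗ[ℝ] ℝ) :
    ConvexOn ℝ K fun x => max 0 (f (1, x)) :=
  (convexOn_const 0 hK).sup ⟨hK, fun x _ y _ a b _ _ hab => by
    simp only [mk_one_smul_add_smul hab, map_add, map_smul, le_refl]⟩

end Perspective

section DecompositionSums

variable {V : Type*} [AddCommGroup V] {g h : V → ℝ}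

def decompositionSums (P : Set V) (g : V → ℝ) (c : V) : Set ℝ :=
  {r | ∃ l : List V, (∀ p ∈ l, p ∈ P) ∧ l.sum = c ∧ (l.map g).sum = r}

theorem mem_decompositionSums_self {P : Set V} {c : V} (hc : c ∈ P) :
    g c ∈ decompositionSums P g c :=
  ⟨[c], by simpa using hc, by simp, by simp⟩

theorem decompositionSums_add_subset (P : Set V) (c d : V) :
    decompositionSums P g c + decompositionSums P g d ⊆ decompositionSums P g (c + d) := by
  rintro _ ⟨_, ⟨l₁, hl₁, rfl, rfl⟩, _, ⟨l₂, hl₂, rfl, rfl⟩, rfl⟩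
  refine ⟨l₁ ++ l₂, fun p hp => ?_, by simp, by simp⟩
  rcases List.mem_append.1 hp with hp | hp
  exacts [hl₁ p hp, hl₂ p hp]

variable {S : Type*} [SetLike S V] [AddSubmonoidClass S V] {P : S}

theorem list_sum_map_le_of_superadditive (hh : ∀ p ∈ P, ∀ q ∈ P, h p + h q ≤ h (p + q))
    (hgh : ∀ p ∈ P, g p ≤ h p) (hh0 : 0 ≤ h 0) {l : List V} (hl : ∀ p ∈ l, p ∈ P) :
    (l.map g).sum ≤ h l.sum := by
  induction l with
  | nil => simpa using hh0
  | cons p l ih =>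
    simp only [List.forall_mem_cons] at hl
    rw [List.map_cons, List.sum_cons, List.sum_cons]
    exact (add_le_add (hgh p hl.1) (ih hl.2)).trans (hh p hl.1 _ (list_sum_mem hl.2))

theorem bddAbove_decompositionSums (hh : ∀ p ∈ P, ∀ q ∈ P, h p + h q ≤ h (p + q))
    (hgh : ∀ p ∈ P, g p ≤ h p) (hh0 : 0 ≤ h 0) (c : V) :
    BddAbove (decompositionSums (P : Set V) g c) := by
  refine ⟨h c, ?_⟩
  rintro _ ⟨l, hl, rfl, rfl⟩
  exact list_sum_map_le_of_superadditive hh hgh hh0 hl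

theorem HasRieszDecomposition.exists_list_refinement (hP : HasRieszDecomposition (P : Set V))
    (hg : ∀ p ∈ P, ∀ q ∈ P, g (p + q) ≤ g p + g q) (hg0 : 0 ≤ g 0) {l : List V}
    (hl : ∀ p ∈ l, p ∈ P) {w₁ w₂ : V} (hw₁ : w₁ ∈ P) (hw₂ : w₂ ∈ P) (hsum : l.sum = w₁ + w₂) :
    ∃ l₁ l₂ : List V, (∀ p ∈ l₁, p ∈ P) ∧ (∀ p ∈ l₂, p ∈ P) ∧ l₁.sum = w₁ ∧ l₂.sum = w₂ ∧
      (l.map g).sum ≤ (l₁.map g).sum + (l₂.map g).sum := by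
  induction l generalizing w₁ w₂ with
  | nil =>
    refine ⟨[w₁], [w₂], by simpa using hw₁, by simpa using hw₂, by simp, by simp, ?_⟩
    rw [List.sum_nil] at hsum
    simpa using (hg0.trans_eq (congrArg g hsum)).trans (hg w₁ hw₁ w₂ hw₂)
  | cons v l ih =>
    simp only [List.forall_mem_cons] at hl
    obtain ⟨a, ha, b, hb, rfl, hw₁a, hw₂b⟩ :=
      hP w₁ hw₁ w₂ hw₂ v hl.1 (by rw [← hsum, List.sum_cons, add_sub_cancel_left]
                                  exact list_sum_mem hl.2)
    obtain ⟨l₁, l₂, hl₁, hl₂, hsum₁, hsum₂, hle⟩ := ih hl.2 hw₁a hw₂b (by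
      rw [List.sum_cons] at hsum
      rw [sub_add_sub_comm, ← hsum]
      abel)
    refine ⟨a :: l₁, b :: l₂, List.forall_mem_cons.2 ⟨ha, hl₁⟩, List.forall_mem_cons.2 ⟨hb, hl₂⟩,
      by simp [hsum₁], by simp [hsum₂], ?_⟩
    simp only [List.map_cons, List.sum_cons]
    linarith [hg a ha b hb]

end DecompositionSums

section RieszCone

variable {V : Type*} [AddCommGroup V] [Module ℝ V] {P : PointedCone ℝ V} {g h : V → ℝ}

theorem smul_decompositionSums_subset (hg : ∀ t : ℝ, 0 < t → ∀ p ∈ P, g (t • p) = t * g p)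
    {t : ℝ} (ht : 0 < t) (c : V) :
    t • decompositionSums (P : Set V) g c ⊆ decompositionSums (P : Set V) g (t • c) := by
  rintro _ ⟨_, ⟨l, hl, rfl, rfl⟩, rfl⟩
  refine ⟨l.map (t • ·), fun p hp => ?_, List.smul_sum.symm, ?_⟩
  · obtain ⟨q, hq, rfl⟩ := List.mem_map.1 hp
    exact P.smul_mem ht.le (hl q hq)
  · simp only [List.map_map, smul_eq_mul, ← List.sum_map_mul_left]
    exact congrArg List.sum (List.map_congr_left fun p hp => hg t ht p (hl p hp))

theorem decompositionSums_smul (hg : ∀ t : ℝ, 0 < t → ∀ p ∈ P, g (t • p) = t * g p)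
    {t : ℝ} (ht : 0 < t) (c : V) :
    decompositionSums (P : Set V) g (t • c) = t • decompositionSums (P : Set V) g c := by
  refine (Set.Subset.antisymm ?_ (smul_decompositionSums_subset hg ht c))
  intro r hr
  rw [Set.mem_smul_set_iff_inv_smul_mem₀ ht.ne']
  simpa [smul_smul, ht.ne'] using
    smul_decompositionSums_subset hg (inv_pos.2 ht) (t • c) (Set.smul_mem_smul_set hr)

theorem HasRieszDecomposition.exists_additive_between (hP : HasRieszDecomposition (P : Set V))
    (hg_add : ∀ p ∈ P, ∀ q ∈ P, g (p + q) ≤ g p + g q)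
    (hg_smul : ∀ t : ℝ, 0 < t → ∀ p ∈ P, g (t • p) = t * g p)
    (hh_add : ∀ p ∈ P, ∀ q ∈ P, h p + h q ≤ h (p + q)) (hgh : ∀ p ∈ P, g p ≤ h p) :
    ∃ φ : V → ℝ, (∀ p ∈ P, g p ≤ φ p ∧ φ p ≤ h p) ∧
      (∀ p ∈ P, ∀ q ∈ P, φ (p + q) = φ p + φ q) ∧
      ∀ t : ℝ, 0 < t → ∀ p ∈ P, φ (t • p) = t * φ p := by
  have hg0 : g 0 = 0 := by
    have := hg_smul 2 two_pos 0 P.zero_mem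
    rw [smul_zero] at this
    linarith
  have hh0 : 0 ≤ h 0 := hg0 ▸ hgh 0 P.zero_mem
  let D := decompositionSums (P : Set V) g
  have hne {c : V} (hc : c ∈ P) : (D c).Nonempty := ⟨_, mem_decompositionSums_self hc⟩
  have hbdd (c : V) : BddAbove (D c) := bddAbove_decompositionSums hh_add hgh hh0 c
  refine ⟨fun c => sSup (D c), fun c hc => ⟨le_csSup (hbdd c) (mem_decompositionSums_self hc),
    csSup_le (hne hc) ?_⟩, fun c hc d hd => le_antisymm ?_ ?_, fun t ht c hc => ?_⟩
  · rintro _ ⟨l, hl, rfl, rfl⟩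
    exact list_sum_map_le_of_superadditive hh_add hgh hh0 hl
  · refine csSup_le (hne (P.add_mem hc hd)) ?_
    rintro _ ⟨l, hl, hsum, rfl⟩
    obtain ⟨l₁, l₂, hl₁, hl₂, rfl, rfl, hle⟩ :=
      hP.exists_list_refinement hg_add hg0.ge hl hc hd hsum
    exact hle.trans (add_le_add (le_csSup (hbdd _) ⟨l₁, hl₁, rfl, rfl⟩)
      (le_csSup (hbdd _) ⟨l₂, hl₂, rfl, rfl⟩))
  · rw [← csSup_add (hne hc) (hbdd c) (hne hd) (hbdd d)]
    exact csSup_le_csSup (hbdd _) ((hne hc).add (hne hd)) (decompositionSums_add_subset _ c d)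
  · simp only [D, decompositionSums_smul hg_smul ht, Real.sSup_smul_of_nonneg ht.le, smul_eq_mul]

end RieszCone

section AffineSandwich

variable {E : Type*} [AddCommGroup E] [Module ℝ E] {K : Set E}

def HasAffineSelections (K : Set E) : Prop :=
  ∀ T : E → Set ℝ,
    (∀ x ∈ K, (T x).Nonempty ∧ IsCompact (T x) ∧ Convex ℝ (T x)) →
    (∀ x ∈ K, ∀ y ∈ K, ∀ θ : ℝ, 0 < θ → θ < 1 →
      (1 - θ) • T x + θ • T y ⊆ T ((1 - θ) • x + θ • y)) →
    ∃ a : E → ℝ, (∀ x ∈ K, a x ∈ T x) ∧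
      (∀ x ∈ K, ∀ y ∈ K, ∀ θ : ℝ, 0 < θ → θ < 1 →
        a ((1 - θ) • x + θ • y) = (1 - θ) • a x + θ • a y)

def HasAffineSandwiches (K : Set E) : Prop :=
  ∀ m M : E → ℝ, ConvexOn ℝ K m → ConcaveOn ℝ K M → (∀ x ∈ K, m x ≤ M x) →
    ∃ a : E → ℝ, (∀ x ∈ K, m x ≤ a x ∧ a x ≤ M x) ∧ ConvexOn ℝ K a ∧ ConcaveOn ℝ K a

theorem convexOn_of_forall_lt_one (hK : Convex ℝ K) {f : E → ℝ}
    (hf : ∀ x ∈ K, ∀ y ∈ K, ∀ θ : ℝ, 0 < θ → θ < 1 →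
      f ((1 - θ) • x + θ • y) ≤ (1 - θ) * f x + θ * f y) : ConvexOn ℝ K f := by
  refine convexOn_iff_forall_pos.2 ⟨hK, fun x hx y hy a b ha hb hab => ?_⟩
  obtain rfl : a = 1 - b := by linarith
  exact hf x hx y hy b hb (by linarith)

theorem concaveOn_of_forall_lt_one (hK : Convex ℝ K) {f : E → ℝ}
    (hf : ∀ x ∈ K, ∀ y ∈ K, ∀ θ : ℝ, 0 < θ → θ < 1 →
      (1 - θ) * f x + θ * f y ≤ f ((1 - θ) • x + θ • y)) : ConcaveOn ℝ K f := by
  refine concaveOn_iff_forall_pos.2 ⟨hK, fun x hx y hy a b ha hb hab => ?_⟩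
  obtain rfl : a = 1 - b := by linarith
  exact hf x hx y hy b hb (by linarith)

theorem HasAffineSelections.hasAffineSandwiches (hK : Convex ℝ K) (H : HasAffineSelections K) :
    HasAffineSandwiches K := by
  intro m M hm hM hmM
  obtain ⟨a, ha, ha_aff⟩ := H (fun x => Icc (m x) (M x))
    (fun x hx => ⟨nonempty_Icc.2 (hmM x hx), isCompact_Icc, convex_Icc _ _⟩)
    (fun x hx y hy θ hθ₀ hθ₁ => by
      rintro _ ⟨_, ⟨r, hr, rfl⟩, _, ⟨r', hr', rfl⟩, rfl⟩
      simp only [smul_eq_mul]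
      constructor
      · exact (hm.2 hx hy (by linarith) hθ₀.le (by ring)).trans
          (add_le_add (mul_le_mul_of_nonneg_left hr.1 (by linarith))
            (mul_le_mul_of_nonneg_left hr'.1 hθ₀.le))
      · exact le_trans (add_le_add (mul_le_mul_of_nonneg_left hr.2 (by linarith))
            (mul_le_mul_of_nonneg_left hr'.2 hθ₀.le))
          (hM.2 hx hy (by linarith) hθ₀.le (by ring)))
  exact ⟨a, ha, convexOn_of_forall_lt_one hK fun x hx y hy θ hθ₀ hθ₁ =>
    (ha_aff x hx y hy θ hθ₀ hθ₁).le, concaveOn_of_forall_lt_one hK fun x hx y hy θ hθ₀ hθ₁ =>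
    (ha_aff x hx y hy θ hθ₀ hθ₁).ge⟩

theorem HasAffineSandwiches.hasAffineSelections (hK : Convex ℝ K) (H : HasAffineSandwiches K) :
    HasAffineSelections K := by
  intro T hT hT_conv
  have hcomb {x y : E} (hx : x ∈ K) (hy : y ∈ K) {θ : ℝ} (hθ₀ : 0 < θ) (hθ₁ : θ < 1)
      {r r' : ℝ} (hr : r ∈ T x) (hr' : r' ∈ T y) :
      (1 - θ) * r + θ * r' ∈ T ((1 - θ) • x + θ • y) :=
    hT_conv x hx y hy θ hθ₀ hθ₁ (add_mem_add (smul_mem_smul_set hr) (smul_mem_smul_set hr'))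
  have hK' {x y : E} (hx : x ∈ K) (hy : y ∈ K) {θ : ℝ} (hθ₀ : 0 < θ) (hθ₁ : θ < 1) :
      (1 - θ) • x + θ • y ∈ K :=
    hK hx hy (by linarith) hθ₀.le (by ring)
  have hinf (x : E) (hx : x ∈ K) : sInf (T x) ∈ T x := (hT x hx).2.1.sInf_mem (hT x hx).1
  have hsup (x : E) (hx : x ∈ K) : sSup (T x) ∈ T x := (hT x hx).2.1.sSup_mem (hT x hx).1
  obtain ⟨a, ha, ha_cvx, ha_ccv⟩ := H (fun x => sInf (T x)) (fun x => sSup (T x))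
    (convexOn_of_forall_lt_one hK fun x hx y hy θ hθ₀ hθ₁ =>
      csInf_le (hT _ (hK' hx hy hθ₀ hθ₁)).2.1.bddBelow
        (hcomb hx hy hθ₀ hθ₁ (hinf x hx) (hinf y hy)))
    (concaveOn_of_forall_lt_one hK fun x hx y hy θ hθ₀ hθ₁ =>
      le_csSup (hT _ (hK' hx hy hθ₀ hθ₁)).2.1.bddAbove
        (hcomb hx hy hθ₀ hθ₁ (hsup x hx) (hsup y hy)))
    (fun x hx => csInf_le_csSup (hT x hx).1 (hT x hx).2.1.bddBelow (hT x hx).2.1.bddAbove)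
  refine ⟨a, fun x hx => (hT x hx).2.2.ordConnected.out (hinf x hx) (hsup x hx) (ha x hx),
    fun x hx y hy θ hθ₀ hθ₁ => le_antisymm ?_ ?_⟩
  · exact ha_cvx.2 hx hy (by linarith) hθ₀.le (by ring)
  · exact ha_ccv.2 hx hy (by linarith) hθ₀.le (by ring)

theorem HasRieszDecomposition.hasAffineSandwiches (hK : Convex ℝ K)
    (hR : HasRieszDecomposition (coneOver K)) : HasAffineSandwiches K := by
  intro m M hm hM hmM
  obtain ⟨φ, hφ, hφ_add, hφ_smul⟩ := hR.exists_additive_between (P := hK.pointedConeOver)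
    (fun p hp q hq => hm.perspective_add_le hp hq) (fun t ht p _ => perspective_smul m ht.ne' p)
    (fun p hp q hq => hM.perspective_add_ge hp hq) (fun p hp => perspective_le_perspective hmM hp)
  have hφ_comb {x y : E} (hx : x ∈ K) (hy : y ∈ K) {a b : ℝ} (ha : 0 < a) (hb : 0 < b)
      (hab : a + b = 1) : φ (1, a • x + b • y) = a • φ (1, x) + b • φ (1, y) := by
    rw [mk_one_smul_add_smul hab, hφ_add _ (smul_mk_one_mem_coneOver ha.le hx) _
      (smul_mk_one_mem_coneOver hb.le hy), hφ_smul a ha _ (mk_one_mem_coneOver hx),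
      hφ_smul b hb _ (mk_one_mem_coneOver hy), smul_eq_mul, smul_eq_mul]
  refine ⟨fun x => φ (1, x), fun x hx => ?_,
    convexOn_iff_forall_pos.2 ⟨hK, fun x hx y hy a b ha hb hab => (hφ_comb hx hy ha hb hab).le⟩,
    concaveOn_iff_forall_pos.2 ⟨hK, fun x hx y hy a b ha hb hab => (hφ_comb hx hy ha hb hab).ge⟩⟩
  simpa [perspective] using hφ _ (mk_one_mem_coneOver hx)

end AffineSandwich

section Separation

variable {E : Type*} [AddCommGroup E] [Module ℝ E] [TopologicalSpace E]
  [IsTopologicalAddGroup E] [ContinuousSMul ℝ E] [T2Space E] {K : Set E}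

theorem sSup_image_orderInterval_mem (hKne : K.Nonempty) (hKcomp : IsCompact K)
    (f : StrongDual ℝ (ℝ × E)) {c : ℝ × E} (hc : c ∈ coneOver K) :
    sSup (f '' orderInterval (coneOver K) c) ∈ f '' orderInterval (coneOver K) c :=
  ((isCompact_orderInterval_coneOver hKne hKcomp c).image f.continuous).sSup_mem
    ⟨_, 0, ⟨zero_mem_coneOver, by simpa using hc⟩, rfl⟩

theorem concaveOn_sSup_image_orderInterval (hKne : K.Nonempty) (hKcomp : IsCompact K)
    (hK : Convex ℝ K) (f : StrongDual ℝ (ℝ × E)) :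
    ConcaveOn ℝ K fun x => sSup (f '' orderInterval (coneOver K) (1, x)) := by
  refine concaveOn_iff_forall_pos.2 ⟨hK, fun x hx y hy a b ha hb hab => ?_⟩
  obtain ⟨q₁, hq₁, hfq₁⟩ := sSup_image_orderInterval_mem hKne hKcomp f (mk_one_mem_coneOver hx)
  obtain ⟨q₂, hq₂, hfq₂⟩ := sSup_image_orderInterval_mem hKne hKcomp f (mk_one_mem_coneOver hy)
  have hq : a • q₁ + b • q₂ ∈ orderInterval (coneOver K) (1, a • x + b • y) := by
    rw [mk_one_smul_add_smul hab]
    exact add_mem_orderInterval hK.pointedConeOver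
      (smul_mem_orderInterval _ ha.le hq₁) (smul_mem_orderInterval _ hb.le hq₂)
  rw [← hfq₁, ← hfq₂, smul_eq_mul, smul_eq_mul]
  simpa using le_csSup
    ((isCompact_orderInterval_coneOver hKne hKcomp _).image f.continuous).bddAbove
    (mem_image_of_mem f hq)

theorem exists_mem_orderInterval_perspective_sSup_le (hKne : K.Nonempty) (hKcomp : IsCompact K)
    (f : StrongDual ℝ (ℝ × E)) {p : ℝ × E} (hp : p ∈ coneOver K) :
    ∃ q ∈ orderInterval (coneOver K) p,
      perspective (fun x => sSup (f '' orderInterval (coneOver K) (1, x))) p ≤ f q := by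
  obtain rfl | ⟨t, ht, x, hx, rfl⟩ := mem_coneOver_iff.1 hp
  · exact ⟨0, ⟨zero_mem_coneOver, by simpa using zero_mem_coneOver⟩, by simp⟩
  obtain ⟨q, hq, hfq⟩ := sSup_image_orderInterval_mem hKne hKcomp f (mk_one_mem_coneOver hx)
  refine ⟨t • q, ?_, ?_⟩
  · exact ⟨smul_mem_coneOver ht.le hq.1, by simpa [smul_sub] using smul_mem_coneOver ht.le hq.2⟩
  · rw [perspective_smul_mk_one, ← hfq, map_smul, smul_eq_mul]

theorem max_zero_le_sSup_image_orderInterval (hKne : K.Nonempty) (hKcomp : IsCompact K)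
    (f : StrongDual ℝ (ℝ × E)) {x : E} (hx : x ∈ K) :
    max 0 (f (1, x)) ≤ sSup (f '' orderInterval (coneOver K) (1, x)) := by
  have hbdd := ((isCompact_orderInterval_coneOver hKne hKcomp (1, x)).image f.continuous).bddAbove
  refine max_le ?_ (le_csSup hbdd ⟨_, ⟨mk_one_mem_coneOver hx, by simpa using zero_mem_coneOver⟩,
    rfl⟩)
  simpa using le_csSup hbdd ⟨0, ⟨zero_mem_coneOver, by simpa using mk_one_mem_coneOver hx⟩, rfl⟩

variable [LocallyConvexSpace ℝ E]

theorem HasAffineSandwiches.hasRieszDecomposition (hKne : K.Nonempty) (hKcomp : IsCompact K)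
    (hK : Convex ℝ K) (H : HasAffineSandwiches K) : HasRieszDecomposition (coneOver K) := by
  intro u hu v hv w hw hwuv
  by_contra! hw_not
  let I := orderInterval (coneOver K)
  have hI (c : ℝ × E) : IsCompact (I c) := isCompact_orderInterval_coneOver hKne hKcomp c
  have hI_conv (c : ℝ × E) : Convex ℝ (I c) := convex_orderInterval hK.pointedConeOver c
  obtain ⟨f, s, hf_lt, hs_lt⟩ := geometric_hahn_banach_closed_point
    ((hI_conv u).add (hI_conv v)) ((hI u).add (hI v)).isClosed (x := w)
    (by rintro ⟨p, hp, q, hq, rfl⟩; exact hw_not p hp.1 q hq.1 rfl hp.2 hq.2)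
  obtain ⟨a, ha, ha_cvx, ha_ccv⟩ := H _ _ (convexOn_max_zero_apply_mk_one hK f.toLinearMap)
    (concaveOn_sSup_image_orderInterval hKne hKcomp hK f)
    fun x hx => max_zero_le_sSup_image_orderInterval hKne hKcomp f hx
  have hφ_add {p q : ℝ × E} (hp : p ∈ coneOver K) (hq : q ∈ coneOver K) :
      perspective a (p + q) = perspective a p + perspective a q :=
    le_antisymm (ha_cvx.perspective_add_le hp hq) (ha_ccv.perspective_add_ge hp hq)
  have hφ_ge {p : ℝ × E} (hp : p ∈ coneOver K) : max 0 (f p) ≤ perspective a p :=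
    perspective_max_zero_apply_mk_one f.toLinearMap hp ▸
      perspective_le_perspective (fun x hx => (ha x hx).1) hp
  have hφ_le {p : ℝ × E} (hp : p ∈ coneOver K) : ∃ q ∈ I p, perspective a p ≤ f q := by
    obtain ⟨q, hq, hle⟩ := exists_mem_orderInterval_perspective_sSup_le hKne hKcomp f hp
    exact ⟨q, hq, (perspective_le_perspective (fun x hx => (ha x hx).2) hp).trans hle⟩
  obtain ⟨q₁, hq₁, hφq₁⟩ := hφ_le hu
  obtain ⟨q₂, hq₂, hφq₂⟩ := hφ_le hv
  have hsum : perspective a w + perspective a (u + v - w) =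
      perspective a u + perspective a v := by
    rw [← hφ_add hw hwuv, add_sub_cancel, hφ_add hu hv]
  have hfw : f w ≤ perspective a w := (le_max_right _ _).trans (hφ_ge hw)
  have hrest : 0 ≤ perspective a (u + v - w) := (le_max_left _ _).trans (hφ_ge hwuv)
  have hfq : f q₁ + f q₂ < s := by simpa using hf_lt _ (add_mem_add hq₁ hq₂)
  linarith

end Separation

/-- Characterization of Choquet simplexes: for a nonempty compact convex set
`K` in a Hausdorff locally convex real TVS, with
`C = {(λ, λ • x) : λ > 0, x ∈ K} ∪ {0}` ordered by `u ≤ v ↔ v - u ∈ C`,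
the following are equivalent: `C` is a lattice; `C` has the Riesz decomposition
property; every convex set-valued map on `K` with nonempty compact convex
values in `ℝ` admits an affine selection. -/
theorem stmt6 {E : Type*} [AddCommGroup E] [Module ℝ E] [TopologicalSpace E]
    [IsTopologicalAddGroup E] [ContinuousSMul ℝ E] [T2Space E]
    [LocallyConvexSpace ℝ E]
    (K : Set E) (hKne : K.Nonempty) (hKcomp : IsCompact K) (hKconv : Convex ℝ K)
    (C : Set (ℝ × E))
    (hC : C = {p : ℝ × E | ∃ l : ℝ, 0 < l ∧ ∃ x ∈ K, p = (l, l • x)} ∪ {0}) :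
    ((∀ u ∈ C, ∀ v ∈ C,
        (∃ s ∈ C, (s - u ∈ C ∧ s - v ∈ C) ∧
          ∀ t ∈ C, t - u ∈ C → t - v ∈ C → t - s ∈ C) ∧
        (∃ i ∈ C, (u - i ∈ C ∧ v - i ∈ C) ∧
          ∀ t ∈ C, u - t ∈ C → v - t ∈ C → i - t ∈ C)) ↔
      (∀ u ∈ C, ∀ v ∈ C, ∀ w ∈ C, u + v - w ∈ C →
        ∃ w₁ ∈ C, ∃ w₂ ∈ C, w = w₁ + w₂ ∧ u - w₁ ∈ C ∧ v - w₂ ∈ C)) ∧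
    ((∀ u ∈ C, ∀ v ∈ C, ∀ w ∈ C, u + v - w ∈ C →
        ∃ w₁ ∈ C, ∃ w₂ ∈ C, w = w₁ + w₂ ∧ u - w₁ ∈ C ∧ v - w₂ ∈ C) ↔
      (∀ T : E → Set ℝ,
        (∀ x ∈ K, (T x).Nonempty ∧ IsCompact (T x) ∧ Convex ℝ (T x)) →
        (∀ x ∈ K, ∀ y ∈ K, ∀ θ : ℝ, 0 < θ → θ < 1 →
          (1 - θ) • T x + θ • T y ⊆ T ((1 - θ) • x + θ • y)) →
        ∃ a : E → ℝ, (∀ x ∈ K, a x ∈ T x) ∧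
          (∀ x ∈ K, ∀ y ∈ K, ∀ θ : ℝ, 0 < θ → θ < 1 →
            a ((1 - θ) • x + θ • y) = (1 - θ) • a x + θ • a y))) := by
  subst hC
  change (IsLatticeCone (coneOver K) ↔ HasRieszDecomposition (coneOver K)) ∧
    (HasRieszDecomposition (coneOver K) ↔ HasAffineSelections K)
  let P := hKconv.pointedConeOver
  exact ⟨⟨IsLatticeCone.hasRieszDecomposition (P := P),
      fun h => HasRieszDecomposition.isLatticeCone (P := P) h (isClosed_coneOver hKne hKcomp)
        (isCompact_orderInterval_coneOver hKne hKcomp)⟩,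
    ⟨fun h => (h.hasAffineSandwiches hKconv).hasAffineSelections hKconv,
      fun h => (h.hasAffineSandwiches hKconv).hasRieszDecomposition hKne hKcomp hKconv⟩⟩
end

section
/- Let K be a compact metrizable topological space and X a real Banach space. Let M₊(K) denote the finite nonnegative Borel measures on K, an ℝ≥0-module under addition and scaling of measures, equipped with the topology of weak convergence (the coarsest topology making μ ↦ ∫ g dμ continuous for every continuous g : K → ℝ). Let T be a superlinear, upper semicontinuous set-valued map assigning to each μ ∈ M₊(K) a nonempty closed subset T(μ) ⊆ X. Suppose f : K → X is continuous and f(x) ∈ T(δ_x) for every x ∈ K, where δ_x is the Dirac measure at x. Then S_f(μ) := ∫_K f dμ (Bochner integral) defines a continuous linear selection of T, and it is the unique continuous linear selection S of T satisfying S(δ_x) = f(x) for all x ∈ K. Conversely, every continuous linear selection S of T equals S_g for the continuous function g(x) = S(δ_x). -/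
/-!
Finitely supported measures `∑ cᵢ • δ_{xᵢ}` are weakly dense in `M₊(K)`: push `μ` forward along
simple functions converging pointwise to the identity. On such measures superlinearity puts
`∫ f d(∑ cᵢ • δ_{xᵢ}) = ∑ cᵢ • f xᵢ` into `T`, and a linear selection is determined by its values
at Dirac masses. Both facts pass to the closure: an upper semicontinuous map with closed values has
closed graph, and `μ ↦ ∫ f dμ` is weakly continuous because `f` is a uniform limit of finite sums
`∑ φᵢ • f xᵢ` built from partitions of unity.
-/

open MeasureTheory Filter Topology Set Metric
open scoped NNReal Pointwise

theorem isClosed_setOf_mem_of_isOpen_setOf_subset {S W : Type*} [TopologicalSpace S]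
    [TopologicalSpace W] [RegularSpace W] {T : S → Set W} (hcl : ∀ s, IsClosed (T s))
    (husc : ∀ G, IsOpen G → IsOpen {s | T s ⊆ G}) :
    IsClosed {p : S × W | p.2 ∈ T p.1} := by
  rw [← isOpen_compl_iff, isOpen_iff_mem_nhds]
  rintro ⟨s, w⟩ hw
  obtain ⟨U, hU, V, hV, hUV⟩ :=
    Filter.disjoint_iff.1 (disjoint_nhdsSet_nhds.2 (by rwa [(hcl s).closure_eq]))
  obtain ⟨G, hG, hsG, hGU⟩ := mem_nhdsSet_iff_exists.1 hU
  filter_upwards [prod_mem_nhds ((husc G hG).mem_nhds hsG) hV] with p hp hpT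
  exact disjoint_left.1 hUV (hGU (hp.1 hpT)) hp.2

theorem zero_mem_of_forall_pos_smul_mem {X : Type*} [AddCommGroup X] [Module ℝ X]
    [TopologicalSpace X] [ContinuousSMul ℝ X] {A : Set X} (hA : IsClosed A) {a : X}
    (h : ∀ c : ℝ≥0, 0 < c → (c : ℝ) • a ∈ A) : (0 : X) ∈ A := by
  have : Tendsto (fun c : ℝ≥0 => (c : ℝ) • a) (𝓝[>] 0) (𝓝 0) :=
    ((NNReal.continuous_coe.smul continuous_const).tendsto' 0 0 (by simp)).mono_left
      nhdsWithin_le_nhds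
  exact hA.mem_of_tendsto this (eventually_nhdsWithin_of_forall h)

section Span

variable {M X : Type*} [AddCommMonoid M] [AddCommGroup X]

theorem map_zero_of_map_add {S : M → X} (hadd : ∀ μ ν, S (μ + ν) = S μ + S ν) : S 0 = 0 := by
  simpa using hadd 0 0

variable [Module ℝ≥0 M] [Module ℝ X]

theorem mem_of_mem_span_of_superlinear {T : M → Set X} {S : M → X} {s : Set M}
    (hT0 : (0 : X) ∈ T 0) (hTsuper : ∀ μ ν, T μ + T ν ⊆ T (μ + ν))
    (hThom : ∀ c : ℝ≥0, 0 < c → ∀ μ, T (c • μ) = (c : ℝ) • T μ)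
    (hSadd : ∀ μ ν, S (μ + ν) = S μ + S ν)
    (hShom : ∀ c : ℝ≥0, 0 < c → ∀ μ, S (c • μ) = (c : ℝ) • S μ)
    (hs : ∀ μ ∈ s, S μ ∈ T μ) {μ : M} (hμ : μ ∈ Submodule.span ℝ≥0 s) : S μ ∈ T μ := by
  induction hμ using Submodule.span_induction with
  | mem μ hμ => exact hs μ hμ
  | zero => rwa [map_zero_of_map_add hSadd]
  | add μ ν _ _ hμ hν => exact hSadd μ ν ▸ hTsuper μ ν (add_mem_add hμ hν)
  | smul c μ _ hμ =>
    rcases eq_zero_or_pos c with rfl | hc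
    · rwa [zero_smul, map_zero_of_map_add hSadd]
    · rw [hShom c hc, hThom c hc]
      exact smul_mem_smul_set hμ

theorem eqOn_span_of_map_add_of_map_smul {S S' : M → X} {s : Set M}
    (hSadd : ∀ μ ν, S (μ + ν) = S μ + S ν)
    (hShom : ∀ c : ℝ≥0, 0 < c → ∀ μ, S (c • μ) = (c : ℝ) • S μ)
    (hS'add : ∀ μ ν, S' (μ + ν) = S' μ + S' ν)
    (hS'hom : ∀ c : ℝ≥0, 0 < c → ∀ μ, S' (c • μ) = (c : ℝ) • S' μ)
    (h : EqOn S S' s) : EqOn S S' (Submodule.span ℝ≥0 s) := by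
  intro μ hμ
  induction hμ using Submodule.span_induction with
  | mem μ hμ => exact h hμ
  | zero => rw [map_zero_of_map_add hSadd, map_zero_of_map_add hS'add]
  | add μ ν _ _ hμ hν => rw [hSadd, hS'add, hμ, hν]
  | smul c μ _ hμ =>
    rcases eq_zero_or_pos c with rfl | hc
    · rw [zero_smul, map_zero_of_map_add hSadd, map_zero_of_map_add hS'add]
    · rw [hShom c hc, hS'hom c hc, hμ]

end Span

theorem exists_forall_norm_sub_sum_smul_le {K X : Type*} [TopologicalSpace K] [CompactSpace K]
    [NormalSpace K] [SeminormedAddCommGroup X] [NormedSpace ℝ X] {f : K → X} (hf : Continuous f)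
    {ε : ℝ} (hε : 0 < ε) :
    ∃ (t : Finset K) (φ : t → C(K, ℝ)), ∀ x, ‖f x - ∑ i, φ i x • f i‖ ≤ ε := by
  obtain ⟨t, ht⟩ := isCompact_univ.elim_finite_subcover (fun y => f ⁻¹' ball (f y) ε)
    (fun y => isOpen_ball.preimage hf) fun x _ => mem_iUnion.2 ⟨x, mem_ball_self hε⟩
  obtain ⟨ρ, hρ⟩ := PartitionOfUnity.exists_isSubordinate isClosed_univ
    (fun i : t => f ⁻¹' ball (f i) ε) (fun i => isOpen_ball.preimage hf)
    (by simpa only [iUnion_subtype] using ht)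
  refine ⟨t, fun i => ρ i, fun x => ?_⟩
  have hmem := ρ.finsum_smul_mem_convex (g := fun i _ => f i) (mem_univ x)
    (fun i hi => (mem_closedBall'.2 (hρ i (subset_closure hi)).le)) (convex_closedBall (f x) ε)
  rwa [finsum_eq_sum_of_fintype, mem_closedBall, dist_eq_norm'] at hmem

namespace MeasureTheory.FiniteMeasure

variable {K : Type*} [MeasurableSpace K]

noncomputable def dirac (x : K) : FiniteMeasure K := ⟨Measure.dirac x, inferInstance⟩

@[simp] theorem toMeasure_dirac (x : K) : (dirac x : Measure K) = Measure.dirac x := rfl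

theorem integral_smul {X : Type*} [NormedAddCommGroup X] [NormedSpace ℝ X] (f : K → X) (c : ℝ≥0)
    (μ : FiniteMeasure K) :
    ∫ x, f x ∂((c • μ : FiniteMeasure K) : Measure K) = (c : ℝ) • ∫ x, f x ∂(μ : Measure K) :=
  integral_smul_nnreal_measure f c

theorem continuous_dirac [TopologicalSpace K] [OpensMeasurableSpace K] :
    Continuous (dirac : K → FiniteMeasure K) :=
  ProbabilityMeasure.toFiniteMeasure_continuous.comp continuous_diracProba

theorem map_mem_span_dirac [MeasurableSingletonClass K] {β : Type*} [MeasurableSpace β]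
    (μ : FiniteMeasure β) (π : SimpleFunc β K) :
    μ.map π ∈ Submodule.span ℝ≥0 (range (dirac : K → FiniteMeasure K)) := by
  have hmap := (Measure.ae_mem_finset_iff_map_eq_sum_dirac π.measurable.aemeasurable).1
    (ae_of_all (μ : Measure β) π.mem_range_self)
  have : μ.map π = ∑ a ∈ π.range, μ (π ⁻¹' {a}) • dirac a := by
    apply toMeasure_injective
    simp only [toMeasure_map, hmap, toMeasure_sum, toMeasure_smul, toMeasure_dirac]
    refine Finset.sum_congr rfl fun a _ => ?_
    rw [← ennreal_coeFn_eq_coeFn_toMeasure]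
    rfl
  rw [this]
  exact Submodule.sum_mem _ fun a _ => Submodule.smul_mem _ _ (Submodule.subset_span ⟨a, rfl⟩)

theorem tendsto_map_of_tendsto [TopologicalSpace K] [OpensMeasurableSpace K] {β : Type*}
    [MeasurableSpace β] (μ : FiniteMeasure β) {π : ℕ → β → K} {g : β → K}
    (hπ : ∀ n, Measurable (π n)) (hg : Measurable g)
    (hlim : ∀ x, Tendsto (fun n => π n x) atTop (𝓝 (g x))) :
    Tendsto (fun n => μ.map (π n)) atTop (𝓝 (μ.map g)) := by
  rw [tendsto_iff_forall_integral_tendsto]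
  intro φ
  simp only [toMeasure_map]
  rw [integral_map hg.aemeasurable φ.continuous.aestronglyMeasurable]
  simp_rw [integral_map (hπ _).aemeasurable φ.continuous.aestronglyMeasurable]
  exact tendsto_integral_of_dominated_convergence (fun _ => ‖φ‖)
    (fun n => (φ.continuous.measurable.comp (hπ n)).aestronglyMeasurable)
    (integrable_const _) (fun n => ae_of_all _ fun x => φ.norm_coe_le_norm _)
    (ae_of_all _ fun x => (φ.continuous.tendsto _).comp (hlim x))

theorem dense_span_dirac [TopologicalSpace K] [TopologicalSpace.PseudoMetrizableSpace K]
    [TopologicalSpace.SeparableSpace K] [BorelSpace K] [MeasurableSingletonClass K] :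
    Dense (Submodule.span ℝ≥0 (range (dirac : K → FiniteMeasure K)) : Set (FiniteMeasure K)) := by
  let := TopologicalSpace.pseudoMetrizableSpacePseudoMetric K
  intro μ
  rcases isEmpty_or_nonempty K with hK | ⟨⟨x₀⟩⟩
  · rw [show μ = 0 from toMeasure_injective (Measure.eq_zero_of_isEmpty _)]
    exact subset_closure (zero_mem _)
  let π := SimpleFunc.approxOn id measurable_id univ x₀ trivial
  have hπ := tendsto_map_of_tendsto μ (fun n => (π n).measurable) measurable_id
    (fun x => SimpleFunc.tendsto_approxOn measurable_id (mem_univ x₀) (by simp))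
  rw [show μ.map id = μ from toMeasure_injective (by simp)] at hπ
  exact mem_closure_of_tendsto hπ (Eventually.of_forall fun n => map_mem_span_dirac μ (π n))

end MeasureTheory.FiniteMeasure

section Integral

variable {K X : Type*} [TopologicalSpace K] [CompactSpace K] [MeasurableSpace K]
  [OpensMeasurableSpace K] [NormedAddCommGroup X]

theorem Continuous.integrable_of_compactSpace {f : K → X} (hf : Continuous f) (μ : Measure K)
    [IsFiniteMeasure μ] : Integrable f μ :=
  hf.integrable_of_hasCompactSupport (HasCompactSupport.of_compactSpace f)

namespace MeasureTheory.FiniteMeasure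

variable [NormedSpace ℝ X]

theorem integral_add {f : K → X} (hf : Continuous f) (μ ν : FiniteMeasure K) :
    ∫ x, f x ∂((μ + ν : FiniteMeasure K) : Measure K) =
      ∫ x, f x ∂(μ : Measure K) + ∫ x, f x ∂(ν : Measure K) :=
  integral_add_measure (hf.integrable_of_compactSpace _) (hf.integrable_of_compactSpace _)

variable [CompleteSpace X]

theorem continuous_integral [T2Space K] {f : K → X} (hf : Continuous f) :
    Continuous fun μ : FiniteMeasure K => ∫ x, f x ∂(μ : Measure K) := by
  refine continuous_of_locally_uniform_approx_of_continuousAt fun μ₀ u hu => ?_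
  obtain ⟨ε, hε, hεu⟩ := mem_uniformity_dist.1 hu
  set M : ℝ := μ₀.mass + 1
  have hM : 0 < M := by positivity
  obtain ⟨t, φ, hφ⟩ := exists_forall_norm_sub_sum_smul_le hf (div_pos hε (mul_pos two_pos hM))
  refine ⟨{μ | (μ.mass : ℝ) < M}, (isOpen_lt (by fun_prop) continuous_const).mem_nhds
    (show (μ₀.mass : ℝ) < M from lt_add_one _), fun μ => ∑ i, (∫ x, φ i x ∂(μ : Measure K)) • f i,
    (continuous_finsetSum _ fun i _ =>
      (continuous_integral_continuousMap (φ i)).smul continuous_const).continuousAt,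
    fun μ hμ => hεu ?_⟩
  have hint : ∀ i, Integrable (fun x => φ i x • f i) (μ : Measure K) :=
    fun i => ((φ i).continuous.integrable_of_compactSpace _).smul_const _
  calc dist (∫ x, f x ∂(μ : Measure K)) (∑ i, (∫ x, φ i x ∂(μ : Measure K)) • f i)
      = ‖∫ x, (f x - ∑ i, φ i x • f i) ∂(μ : Measure K)‖ := by
        rw [dist_eq_norm, integral_sub (hf.integrable_of_compactSpace _)
          (integrable_finsetSum _ fun i _ => hint i), integral_finsetSum _ fun i _ => hint i]
        simp_rw [integral_smul_const]
    _ ≤ ε / (2 * M) * μ.mass := norm_integral_le_of_norm_le_const (ae_of_all _ hφ)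
    _ < ε := by
        rw [div_mul_eq_mul_div, div_lt_iff₀ (by positivity)]
        nlinarith [mul_lt_mul_of_pos_left (show (μ.mass : ℝ) < M from hμ) hε]

theorem eq_integral_of_map_add [TopologicalSpace.MetrizableSpace K] [BorelSpace K]
    {S : FiniteMeasure K → X} (hS : Continuous S)
    (hSadd : ∀ μ ν, S (μ + ν) = S μ + S ν)
    (hShom : ∀ c : ℝ≥0, 0 < c → ∀ μ, S (c • μ) = (c : ℝ) • S μ)
    {f : K → X} (hf : Continuous f) (hSf : ∀ x, S (dirac x) = f x) :
    S = fun μ : FiniteMeasure K => ∫ x, f x ∂(μ : Measure K) :=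
  hS.ext_on dense_span_dirac (continuous_integral hf)
    (eqOn_span_of_map_add_of_map_smul hSadd hShom (integral_add hf)
      (fun c _ => integral_smul f c) (by rintro _ ⟨x, rfl⟩; simp [hSf]))

end MeasureTheory.FiniteMeasure

end Integral

/-- Parametrization of continuous linear selections of an upper semicontinuous
superlinear set-valued map on the space of finite nonnegative Borel measures on
a compact metrizable space (with the topology of weak convergence) by the
boundary values on Dirac measures: `S_f μ = ∫ f dμ`. -/
theorem stmt7 {K X : Type*}
    [TopologicalSpace K] [CompactSpace K] [TopologicalSpace.MetrizableSpace K]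
    [MeasurableSpace K] [BorelSpace K]
    [NormedAddCommGroup X] [NormedSpace ℝ X] [CompleteSpace X]
    (T : FiniteMeasure K → Set X)
    (hTne : ∀ μ, (T μ).Nonempty) (hTcl : ∀ μ, IsClosed (T μ))
    (hTsuper : ∀ μ ν, T μ + T ν ⊆ T (μ + ν))
    (hThom : ∀ c : ℝ≥0, 0 < c → ∀ μ, T (c • μ) = (c : ℝ) • T μ)
    (hTusc : ∀ G : Set X, IsOpen G → IsOpen {μ : FiniteMeasure K | T μ ⊆ G})
    (f : K → X) (hf : Continuous f)
    (hfsel : ∀ x : K,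
      f x ∈ T (⟨Measure.dirac x, inferInstance⟩ : FiniteMeasure K)) :
    (Continuous fun μ : FiniteMeasure K => ∫ x, f x ∂(μ : Measure K)) ∧
    (∀ μ : FiniteMeasure K, (∫ x, f x ∂(μ : Measure K)) ∈ T μ) ∧
    (∀ μ ν : FiniteMeasure K,
      (∫ x, f x ∂((μ + ν : FiniteMeasure K) : Measure K)) =
        (∫ x, f x ∂(μ : Measure K)) + ∫ x, f x ∂(ν : Measure K)) ∧
    (∀ c : ℝ≥0, 0 < c → ∀ μ : FiniteMeasure K,
      (∫ x, f x ∂((c • μ : FiniteMeasure K) : Measure K)) =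
        (c : ℝ) • ∫ x, f x ∂(μ : Measure K)) ∧
    (∀ S : FiniteMeasure K → X, Continuous S → (∀ μ, S μ ∈ T μ) →
      (∀ μ ν, S (μ + ν) = S μ + S ν) →
      (∀ c : ℝ≥0, 0 < c → ∀ μ, S (c • μ) = (c : ℝ) • S μ) →
      (∀ x : K, S (⟨Measure.dirac x, inferInstance⟩ : FiniteMeasure K) = f x) →
      S = fun μ : FiniteMeasure K => ∫ x, f x ∂(μ : Measure K)) ∧
    (∀ S : FiniteMeasure K → X, Continuous S → (∀ μ, S μ ∈ T μ) →
      (∀ μ ν, S (μ + ν) = S μ + S ν) →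
      (∀ c : ℝ≥0, 0 < c → ∀ μ, S (c • μ) = (c : ℝ) • S μ) →
      (Continuous fun x : K =>
          S (⟨Measure.dirac x, inferInstance⟩ : FiniteMeasure K)) ∧
        ∀ μ : FiniteMeasure K,
          S μ = ∫ x,
            S (⟨Measure.dirac x, inferInstance⟩ : FiniteMeasure K)
              ∂(μ : Measure K)) := by
  have hcont := FiniteMeasure.continuous_integral hf
  have hadd := FiniteMeasure.integral_add hf
  have hsmul : ∀ c : ℝ≥0, 0 < c → _ := fun c _ => FiniteMeasure.integral_smul f c
  have hT0 : (0 : X) ∈ T 0 := by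
    obtain ⟨a, ha⟩ := hTne 0
    refine zero_mem_of_forall_pos_smul_mem (hTcl 0) (a := a) fun c hc => ?_
    have hT0c := hThom c hc 0
    rw [smul_zero] at hT0c
    exact hT0c ▸ smul_mem_smul_set ha
  have hsel : ∀ μ ∈ Submodule.span ℝ≥0 (range FiniteMeasure.dirac),
      ∫ x, f x ∂(μ : Measure K) ∈ T μ := fun μ hμ =>
    mem_of_mem_span_of_superlinear (S := fun μ : FiniteMeasure K => ∫ x, f x ∂(μ : Measure K))
      hT0 hTsuper hThom hadd hsmul
      (by rintro _ ⟨x, rfl⟩; rw [FiniteMeasure.toMeasure_dirac, integral_dirac]; exact hfsel x) hμ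
  have hclosed : IsClosed {μ : FiniteMeasure K | ∫ x, f x ∂(μ : Measure K) ∈ T μ} :=
    (isClosed_setOf_mem_of_isOpen_setOf_subset hTcl hTusc).preimage (continuous_id.prodMk hcont)
  refine ⟨hcont, fun μ => closure_minimal hsel hclosed (FiniteMeasure.dense_span_dirac μ), hadd,
    hsmul, fun S hS _ hSadd hShom hSf => FiniteMeasure.eq_integral_of_map_add hS hSadd hShom hf hSf,
    fun S hS _ hSadd hShom => ⟨hS.comp FiniteMeasure.continuous_dirac, fun μ => ?_⟩⟩
  exact congrFun (FiniteMeasure.eq_integral_of_map_add hS hSadd hShom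
    (hS.comp FiniteMeasure.continuous_dirac) fun _ => rfl) μ
end

section
/- Let W be a Hausdorff locally convex real topological vector space. Let 𝔄 and 𝔅 be nonempty families of nonempty compact convex subsets of W, each downward directed by inclusion (for any A₁, A₂ ∈ 𝔄 there is A₃ ∈ 𝔄 with A₃ ⊆ A₁ ∩ A₂, and similarly for 𝔅). If a set Z ⊆ W satisfies Z ⊆ A + B (Minkowski sum) for every A ∈ 𝔄 and every B ∈ 𝔅, then Z ⊆ (⋂ 𝔄) + (⋂ 𝔅). -/
/-!
The decompositions `z = a + b` with `a ∈ A`, `b ∈ B` form a nonempty compact subset of `A × B`,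
and these sets shrink along the directed families. By Cantor's intersection theorem some pair
`(a, b)` is a decomposition for all `A` and `B` at once, so `a ∈ ⋂₀ 𝔄` and `b ∈ ⋂₀ 𝔅`.
-/

open scoped Pointwise

open Set

theorem directedOn_superset_of_exists_subset_inter {α : Type*} {𝔖 : Set (Set α)}
    (h : ∀ S₁ ∈ 𝔖, ∀ S₂ ∈ 𝔖, ∃ S₃ ∈ 𝔖, S₃ ⊆ S₁ ∩ S₂) : DirectedOn (· ⊇ ·) 𝔖 :=
  fun S₁ h₁ S₂ h₂ ↦
    let ⟨S₃, h₃, hsub⟩ := h S₁ h₁ S₂ h₂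
    ⟨S₃, h₃, subset_inter_iff.1 hsub⟩

section

variable {G : Type*} [Add G] [TopologicalSpace G] [ContinuousAdd G] [T2Space G]

theorem isCompact_prod_inter_add_preimage {A B : Set G} (hA : IsCompact A) (hB : IsCompact B)
    (z : G) : IsCompact (A ×ˢ B ∩ (fun q : G × G ↦ q.1 + q.2) ⁻¹' {z}) :=
  (hA.prod hB).inter_right (isClosed_singleton.preimage continuous_add)

theorem mem_sInter_add_sInter_of_forall_mem_add {𝔄 𝔅 : Set (Set G)}
    (h𝔄ne : 𝔄.Nonempty) (h𝔅ne : 𝔅.Nonempty)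
    (h𝔄 : ∀ A ∈ 𝔄, IsCompact A) (h𝔅 : ∀ B ∈ 𝔅, IsCompact B)
    (hdir𝔄 : DirectedOn (· ⊇ ·) 𝔄) (hdir𝔅 : DirectedOn (· ⊇ ·) 𝔅) {z : G}
    (hz : ∀ A ∈ 𝔄, ∀ B ∈ 𝔅, z ∈ A + B) : z ∈ ⋂₀ 𝔄 + ⋂₀ 𝔅 := by
  obtain ⟨A₀, hA₀⟩ := h𝔄ne
  obtain ⟨B₀, hB₀⟩ := h𝔅ne
  have : Nonempty (𝔄 × 𝔅) := ⟨(⟨A₀, hA₀⟩, ⟨B₀, hB₀⟩)⟩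
  let K : 𝔄 × 𝔅 → Set (G × G) := fun p ↦
    (p.1 : Set G) ×ˢ (p.2 : Set G) ∩ (fun q : G × G ↦ q.1 + q.2) ⁻¹' {z}
  have hKc (p : 𝔄 × 𝔅) : IsCompact (K p) :=
    isCompact_prod_inter_add_preimage (h𝔄 _ p.1.2) (h𝔅 _ p.2.2) z
  have hKne (p : 𝔄 × 𝔅) : (K p).Nonempty := by
    obtain ⟨a, ha, b, hb, hab⟩ := hz _ p.1.2 _ p.2.2
    exact ⟨(a, b), ⟨ha, hb⟩, hab⟩
  have hKdir : Directed (· ⊇ ·) K := by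
    rintro ⟨⟨A₁, hA₁⟩, ⟨B₁, hB₁⟩⟩ ⟨⟨A₂, hA₂⟩, ⟨B₂, hB₂⟩⟩
    obtain ⟨A₃, hA₃, hA₁₃, hA₂₃⟩ := hdir𝔄 A₁ hA₁ A₂ hA₂
    obtain ⟨B₃, hB₃, hB₁₃, hB₂₃⟩ := hdir𝔅 B₁ hB₁ B₂ hB₂
    exact ⟨(⟨A₃, hA₃⟩, ⟨B₃, hB₃⟩), inter_subset_inter_left _ (prod_mono hA₁₃ hB₁₃),
      inter_subset_inter_left _ (prod_mono hA₂₃ hB₂₃)⟩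
  obtain ⟨⟨a, b⟩, hab⟩ := IsCompact.nonempty_iInter_of_directed_nonempty_isCompact_isClosed
    K hKdir hKne hKc fun p ↦ (hKc p).isClosed
  simp only [mem_iInter] at hab
  refine ⟨a, fun A hA ↦ ?_, b, fun B hB ↦ ?_, (hab (⟨A₀, hA₀⟩, ⟨B₀, hB₀⟩)).2⟩
  · exact (hab (⟨A, hA⟩, ⟨B₀, hB₀⟩)).1.1
  · exact (hab (⟨A₀, hA₀⟩, ⟨B, hB⟩)).1.2

end

theorem stmt8_general {W : Type*} [AddCommGroup W] [Module ℝ W] [TopologicalSpace W]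
    [IsTopologicalAddGroup W] [T2Space W]
    (𝔄 𝔅 : Set (Set W)) (h𝔄ne : 𝔄.Nonempty) (h𝔅ne : 𝔅.Nonempty)
    (h𝔄 : ∀ A ∈ 𝔄, A.Nonempty ∧ IsCompact A ∧ Convex ℝ A)
    (h𝔅 : ∀ B ∈ 𝔅, B.Nonempty ∧ IsCompact B ∧ Convex ℝ B)
    (hdir𝔄 : ∀ A₁ ∈ 𝔄, ∀ A₂ ∈ 𝔄, ∃ A₃ ∈ 𝔄, A₃ ⊆ A₁ ∩ A₂)
    (hdir𝔅 : ∀ B₁ ∈ 𝔅, ∀ B₂ ∈ 𝔅, ∃ B₃ ∈ 𝔅, B₃ ⊆ B₁ ∩ B₂)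
    (Z : Set W) (hZ : ∀ A ∈ 𝔄, ∀ B ∈ 𝔅, Z ⊆ A + B) :
    Z ⊆ ⋂₀ 𝔄 + ⋂₀ 𝔅 := fun _ hz ↦
  mem_sInter_add_sInter_of_forall_mem_add h𝔄ne h𝔅ne (fun A hA ↦ (h𝔄 A hA).2.1)
    (fun B hB ↦ (h𝔅 B hB).2.1) (directedOn_superset_of_exists_subset_inter hdir𝔄)
    (directedOn_superset_of_exists_subset_inter hdir𝔅) fun A hA B hB ↦ hZ A hA B hB hz

/-- Order regularity of the space of nonempty compact convex subsets of a
Hausdorff locally convex real TVS: if `Z ⊆ A + B` for all members `A`, `B` of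
two downward directed families of nonempty compact convex sets, then
`Z ⊆ ⋂ 𝔄 + ⋂ 𝔅`. -/
theorem stmt8 {W : Type*} [AddCommGroup W] [Module ℝ W] [TopologicalSpace W]
    [IsTopologicalAddGroup W] [ContinuousSMul ℝ W] [T2Space W]
    [LocallyConvexSpace ℝ W]
    (𝔄 𝔅 : Set (Set W)) (h𝔄ne : 𝔄.Nonempty) (h𝔅ne : 𝔅.Nonempty)
    (h𝔄 : ∀ A ∈ 𝔄, A.Nonempty ∧ IsCompact A ∧ Convex ℝ A)
    (h𝔅 : ∀ B ∈ 𝔅, B.Nonempty ∧ IsCompact B ∧ Convex ℝ B)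
    (hdir𝔄 : ∀ A₁ ∈ 𝔄, ∀ A₂ ∈ 𝔄, ∃ A₃ ∈ 𝔄, A₃ ⊆ A₁ ∩ A₂)
    (hdir𝔅 : ∀ B₁ ∈ 𝔅, ∀ B₂ ∈ 𝔅, ∃ B₃ ∈ 𝔅, B₃ ⊆ B₁ ∩ B₂)
    (Z : Set W) (hZ : ∀ A ∈ 𝔄, ∀ B ∈ 𝔅, Z ⊆ A + B) :
    Z ⊆ ⋂₀ 𝔄 + ⋂₀ 𝔅 :=
  stmt8_general 𝔄 𝔅 h𝔄ne h𝔅ne h𝔄 h𝔅 hdir𝔄 hdir𝔅 Z hZ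
end

section
/- Let S and W be ℝ≥0-modules, let g : W → ℝ be additive and positively homogeneous (g(u + v) = g(u) + g(v) and g(c • u) = c·g(u) for c > 0), and let T be a linear set-valued map assigning to each x ∈ S a nonempty convex subset T(x) ⊆ W on which g is bounded above. Then the support function g*_T(x) := sup_{y ∈ T(x)} g(y) is a well-defined real-valued function on S which is additive and positively homogeneous. -/
open scoped NNReal Pointwise

theorem sSup_image_add_of_map_add {W : Type*} [Add W] {g : W → ℝ}
    (hg : ∀ u v, g (u + v) = g u + g v) {A B : Set W} (hA : A.Nonempty) (hB : B.Nonempty)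
    (hAbdd : BddAbove (g '' A)) (hBbdd : BddAbove (g '' B)) :
    sSup (g '' (A + B)) = sSup (g '' A) + sSup (g '' B) := by
  have himage : g '' (A + B) = g '' A + g '' B := Set.image_image2_distrib hg
  rw [himage]
  exact csSup_add (hA.image g) hAbdd (hB.image g) hBbdd

theorem sSup_image_smul_of_map_smul {W : Type*} [SMul ℝ≥0 W] {g : W → ℝ} {c : ℝ≥0}
    (hg : ∀ u, g (c • u) = c * g u) (A : Set W) :
    sSup (g '' (c • A)) = c * sSup (g '' A) := by
  have himage : g '' (c • A) = (c : ℝ) • g '' A := Set.image_comm hg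
  rw [himage, Real.sSup_smul_of_nonneg c.coe_nonneg, smul_eq_mul]

theorem stmt10_general {S W : Type*} [AddCommMonoid S] [Module ℝ≥0 S]
    [AddCommMonoid W] [Module ℝ≥0 W]
    (g : W → ℝ)
    (hgadd : ∀ u v, g (u + v) = g u + g v)
    (hghom : ∀ c : ℝ≥0, 0 < c → ∀ u, g (c • u) = (c : ℝ) * g u)
    (T : S → Set W)
    (hTne : ∀ x, (T x).Nonempty)
    (hTadd : ∀ x y, T x + T y = T (x + y))
    (hThom : ∀ c : ℝ≥0, 0 < c → ∀ x, T (c • x) = c • T x)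
    (hbdd : ∀ x, BddAbove (g '' T x)) :
    (∀ x y, sSup (g '' T (x + y)) = sSup (g '' T x) + sSup (g '' T y)) ∧
    (∀ c : ℝ≥0, 0 < c → ∀ x, sSup (g '' T (c • x)) = (c : ℝ) * sSup (g '' T x)) := by
  refine ⟨fun x y => ?_, fun c hc x => ?_⟩
  · rw [← hTadd]
    exact sSup_image_add_of_map_add hgadd (hTne x) (hTne y) (hbdd x) (hbdd y)
  · rw [hThom c hc]
    exact sSup_image_smul_of_map_smul (hghom c hc) (T x)

/-- The support function of a linear set-valued map between `ℝ≥0`-modules,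
taken with respect to an additive positively homogeneous functional bounded
above on the values, is additive and positively homogeneous. -/
theorem stmt10 {S W : Type*} [AddCommMonoid S] [Module ℝ≥0 S]
    [AddCommMonoid W] [Module ℝ≥0 W]
    (g : W → ℝ)
    (hgadd : ∀ u v, g (u + v) = g u + g v)
    (hghom : ∀ c : ℝ≥0, 0 < c → ∀ u, g (c • u) = (c : ℝ) * g u)
    (T : S → Set W)
    (hTne : ∀ x, (T x).Nonempty)
    (hTconv : ∀ x, ∀ u ∈ T x, ∀ v ∈ T x, ∀ θ : ℝ≥0, 0 < θ → θ < 1 →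
      θ • u + (1 - θ) • v ∈ T x)
    (hTadd : ∀ x y, T x + T y = T (x + y))
    (hThom : ∀ c : ℝ≥0, 0 < c → ∀ x, T (c • x) = c • T x)
    (hbdd : ∀ x, BddAbove (g '' T x)) :
    (∀ x y, sSup (g '' T (x + y)) = sSup (g '' T x) + sSup (g '' T y)) ∧
    (∀ c : ℝ≥0, 0 < c → ∀ x, sSup (g '' T (c • x)) = (c : ℝ) * sSup (g '' T x)) :=
  stmt10_general g hgadd hghom T hTne hTadd hThom hbdd
end

section
/- Let S be an ℝ≥0-module admitting a cone-basis B. Then S has the Riesz decomposition (interpolation) property in the following algebraic form: whenever z ∈ S and z = x₁ + … + x_m = y₁ + … + y_n with all x_j, y_k ∈ S, there exist elements z_{jk} ∈ S (1 ≤ j ≤ m, 1 ≤ k ≤ n) such that x_j = ∑_{k=1}^n z_{jk} for every j and y_k = ∑_{j=1}^m z_{jk} for every k. -/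
/-!
A cone-basis is a basis of `S` as an `ℝ≥0`-module, so coordinates identify `S` with `B →₀ ℝ≥0`
and it suffices to refine decompositions there, coordinatewise. In `ℝ≥0` the refinement of
`z = ∑ⱼ xⱼ = ∑ₖ yₖ` is `w j k = xⱼ yₖ / z` (if `z = 0`, every summand vanishes). In a canonically
ordered monoid `w j k` vanishes wherever `xⱼ` does, so the coordinatewise refinement of finitely
supported families is again finitely supported.
-/

open scoped NNReal

open Finset

def HasRieszRefinement (M : Type*) [AddCommMonoid M] : Prop :=
  ∀ (m n : ℕ) (x : Fin m → M) (y : Fin n → M), ∑ j, x j = ∑ k, y k →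
    ∃ w : Fin m → Fin n → M, (∀ j, x j = ∑ k, w j k) ∧ (∀ k, y k = ∑ j, w j k)

theorem HasRieszRefinement.of_addEquiv {M N : Type*} [AddCommMonoid M] [AddCommMonoid N]
    (e : M ≃+ N) (h : HasRieszRefinement N) : HasRieszRefinement M := by
  intro m n x y hxy
  obtain ⟨w, hwx, hwy⟩ := h m n (e ∘ x) (e ∘ y) (by simp only [Function.comp_apply, ← map_sum, hxy])
  refine ⟨fun j k => e.symm (w j k), fun j => ?_, fun k => ?_⟩
  · rw [← map_sum, ← hwx j, Function.comp_apply, AddEquiv.symm_apply_apply]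
  · rw [← map_sum, ← hwy k, Function.comp_apply, AddEquiv.symm_apply_apply]

theorem sum_mul_div_eq_of_sum_eq {K ι : Type*} [Semifield K] {s : Finset ι} {a z : K}
    {y : ι → K} (hy : ∑ k ∈ s, y k = z) (ha : z = 0 → a = 0) :
    ∑ k ∈ s, a * y k / z = a := by
  by_cases hz : z = 0
  · simp [ha hz]
  · rw [← sum_div, ← mul_sum, hy, mul_div_cancel_right₀ a hz]

theorem hasRieszRefinement_of_canonicallyOrderedAdd {K : Type*} [Semifield K] [PartialOrder K]
    [CanonicallyOrderedAdd K] : HasRieszRefinement K := by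
  intro m n x y hxy
  refine ⟨fun j k => x j * y k / ∑ i, x i, fun j => ?_, fun k => ?_⟩
  · exact (sum_mul_div_eq_of_sum_eq hxy.symm fun h => sum_eq_zero_iff.mp h j (mem_univ j)).symm
  · simp_rw [mul_comm (x _) (y k)]
    refine (sum_mul_div_eq_of_sum_eq rfl fun h => ?_).symm
    exact sum_eq_zero_iff.mp (hxy ▸ h) k (mem_univ k)

theorem Finsupp.hasRieszRefinement {ι M : Type*} [AddCommMonoid M] [PartialOrder M]
    [CanonicallyOrderedAdd M] (h : HasRieszRefinement M) : HasRieszRefinement (ι →₀ M) := by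
  intro m n x y hxy
  choose w hwx hwy using fun b => h m n (x · b) (y · b) (by simp only [← finsetSum_apply, hxy])
  have hw_support (j : Fin m) (k : Fin n) (b : ι) (hb : w b j k ≠ 0) : b ∈ (x j).support :=
    mem_support_iff.mpr fun hxb =>
      hb (sum_eq_zero_iff.mp ((hwx b j).symm.trans hxb) k (mem_univ k))
  refine ⟨fun j k => onFinset _ _ (hw_support j k), fun j => ?_, fun k => ?_⟩
  · ext b
    simp only [finsetSum_apply, onFinset_apply, hwx b j]
  · ext b
    simp only [finsetSum_apply, onFinset_apply, hwy b k]

noncomputable def Module.Basis.ofExistsUniqueRepr {R M : Type*} [Semiring R] [AddCommMonoid M]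
    [Module R M] (B : Set M) (hB : ∀ x : M, ∃! α : B →₀ R, x = α.sum fun b c => c • (b : M)) :
    Module.Basis B R M :=
  .ofRepr <| LinearEquiv.symm <| .ofBijective (Finsupp.linearCombination R (↑))
    ⟨fun _ _ h => (hB _).unique (Finsupp.linearCombination_apply _ _)
        (h.trans (Finsupp.linearCombination_apply _ _)),
      fun x => (hB x).exists.imp fun _ h => h.symm⟩

theorem stmt12_general {S : Type*} [AddCommMonoid S] [Module ℝ≥0 S]
    (B : Set S)
    (hB : ∀ x : S, ∃! α : B →₀ ℝ≥0, x = α.sum fun b c => c • (b : S))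
    (z : S) (m n : ℕ)
    (x : Fin m → S) (y : Fin n → S)
    (hx : z = ∑ j, x j) (hy : z = ∑ k, y k) :
    ∃ w : Fin m → Fin n → S,
      (∀ j, x j = ∑ k, w j k) ∧ (∀ k, y k = ∑ j, w j k) := by
  have hS : HasRieszRefinement S :=
    (Finsupp.hasRieszRefinement hasRieszRefinement_of_canonicallyOrderedAdd).of_addEquiv
      (Module.Basis.ofExistsUniqueRepr B hB).repr.toAddEquiv
  exact hS m n x y (hx.symm.trans hy)

/-- An `ℝ≥0`-module admitting a cone-basis has the Riesz decomposition
(interpolation) property in the algebraic form: two finite decompositions of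
the same element have a common refinement. -/
theorem stmt12 {S : Type*} [AddCommMonoid S] [Module ℝ≥0 S]
    (B : Set S)
    (hB : ∀ x : S, ∃! α : B →₀ ℝ≥0, x = α.sum fun b c => c • (b : S))
    (z : S) (m n : ℕ) (hm : 0 < m) (hn : 0 < n)
    (x : Fin m → S) (y : Fin n → S)
    (hx : z = ∑ j, x j) (hy : z = ∑ k, y k) :
    ∃ w : Fin m → Fin n → S,
      (∀ j, x j = ∑ k, w j k) ∧ (∀ k, y k = ∑ j, w j k) :=
  stmt12_general B hB z m n x y hx hy
end

section
/- Let K = {f ∈ L¹([0,1], Lebesgue measure; ℝ) : f ≥ 0 almost everywhere}, an ℝ≥0-module under pointwise addition and nonnegative scalar multiplication. Then K has no cone-basis: there is no subset B ⊆ K such that every f ∈ K admits a unique finitely supported function α : B → ℝ≥0 with f = ∑_{b ∈ B} α(b) • b. -/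
/-!
A basis element `b` of a cone basis is extremal: if `0 ≤ g ≤ b`, the representations of `g` and
`b - g` add up to a representation of `b`, so by uniqueness both are supported on `{b}` and `g` is
a multiple of `b`. In `Lᵖ` of an atomless measure no nonzero `f ≥ 0` is extremal: with a measurable
injection `w` into `[0, 1]`, the minorant `w * f` is proportional to `f` only where `w` takes a
single value, a null set.
-/

open MeasureTheory
open scoped NNReal ENNReal

def IsConeBasis {E : Type*} [AddCommGroup E] [PartialOrder E] [Module ℝ E] (B : Set E) : Prop :=
  (∀ b ∈ B, 0 ≤ b) ∧
    ∀ f : E, 0 ≤ f → ∃! α : B →₀ ℝ≥0, f = α.sum fun b c => (c : ℝ) • (b : E)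

namespace IsConeBasis

variable {E : Type*} [AddCommGroup E] [PartialOrder E] [Module ℝ E] {B : Set E}

theorem ne_zero (hB : IsConeBasis B) {b : E} (hb : b ∈ B) : b ≠ 0 := by
  rintro rfl
  have h := (hB.2 0 le_rfl).unique (y₁ := Finsupp.single ⟨0, hb⟩ 1) (y₂ := 0)
    (by simp [Finsupp.sum_single_index]) (by rw [Finsupp.sum_zero_index])
  simpa using DFunLike.congr_fun h ⟨0, hb⟩

theorem nonempty (hB : IsConeBasis B) {f : E} (hf : 0 ≤ f) (hf0 : f ≠ 0) : B.Nonempty := by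
  obtain ⟨α, hα, -⟩ := hB.2 f hf
  by_contra hBe
  rw [Set.not_nonempty_iff_eq_empty] at hBe
  subst hBe
  exact hf0 (by simpa [Subsingleton.elim α 0] using hα)

theorem eq_smul_of_le [IsOrderedAddMonoid E] (hB : IsConeBasis B) {b : E} (hb : b ∈ B)
    {g : E} (hg : 0 ≤ g) (hgb : g ≤ b) : ∃ t : ℝ≥0, g = (t : ℝ) • b := by
  obtain ⟨α, hα, -⟩ := hB.2 g hg
  obtain ⟨β, hβ, -⟩ := hB.2 (b - g) (sub_nonneg.2 hgb)
  have hαβ : α + β = Finsupp.single ⟨b, hb⟩ 1 :=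
    (hB.2 b (hB.1 b hb)).unique
      (by rw [Finsupp.sum_add_index' (by simp) (by simp [add_smul]), ← hα, ← hβ,
        add_sub_cancel])
      (by simp [Finsupp.sum_single_index])
  have hsupp : α.support ⊆ {⟨b, hb⟩} :=
    calc α.support ⊆ (α + β).support := Finsupp.support_mono le_self_add
      _ = {⟨b, hb⟩} := by simp [hαβ]
  refine ⟨α ⟨b, hb⟩, ?_⟩
  rw [hα, Finsupp.support_subset_singleton.1 hsupp, Finsupp.sum_single_index (by simp),
    Finsupp.single_eq_same]

end IsConeBasis

theorem not_isConeBasis {E : Type*} [AddCommGroup E] [PartialOrder E] [IsOrderedAddMonoid E]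
    [Module ℝ E] (hE : ∃ f : E, 0 ≤ f ∧ f ≠ 0)
    (hsplit : ∀ f : E, 0 ≤ f → f ≠ 0 → ∃ g, 0 ≤ g ∧ g ≤ f ∧ ∀ t : ℝ, g ≠ t • f) (B : Set E) :
    ¬ IsConeBasis B := by
  intro hB
  obtain ⟨f, hf, hf0⟩ := hE
  obtain ⟨b, hb⟩ := hB.nonempty hf hf0
  obtain ⟨g, hg, hgb, hg_ne⟩ := hsplit b (hB.1 b hb) (hB.ne_zero hb)
  obtain ⟨t, rfl⟩ := hB.eq_smul_of_le hb hg hgb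
  exact hg_ne t rfl

namespace MeasureTheory.Lp

variable {α : Type*} [MeasurableSpace α] {μ : Measure α} {p : ℝ≥0∞}

theorem exists_nonneg_le_ne_smul [StandardBorelSpace α] [NullSingletonClass μ]
    {f : Lp ℝ p μ} (hf : 0 ≤ f) (hf0 : f ≠ 0) :
    ∃ g : Lp ℝ p μ, 0 ≤ g ∧ g ≤ f ∧ ∀ t : ℝ, g ≠ t • f := by
  have hemb := measurableEmbedding_sigmoid_comp_embeddingReal α
  set w : α → ℝ := fun x => (unitInterval.sigmoid (embeddingReal α x) : ℝ)
  have hw_meas : Measurable w := measurable_subtype_coe.comp hemb.measurable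
  have hw_inj : Function.Injective w := Subtype.val_injective.comp hemb.injective
  have hw0 (x : α) : 0 ≤ w x := unitInterval.nonneg _
  have hw1 (x : α) : w x ≤ 1 := unitInterval.le_one _
  have hmem : MemLp (fun x => w x * f x) p μ :=
    (Lp.memLp f).of_le (hw_meas.aestronglyMeasurable.mul (Lp.aestronglyMeasurable f))
      (ae_of_all _ fun x => by
        rw [norm_mul, Real.norm_of_nonneg (hw0 x)]
        exact mul_le_of_le_one_left (norm_nonneg _) (hw1 x))
  have hf_ae := (Lp.coeFn_nonneg f).2 hf
  refine ⟨hmem.toLp _, ?_, ?_, fun t ht => hf0 ?_⟩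
  · rw [← Lp.coeFn_nonneg]
    filter_upwards [hmem.coeFn_toLp, hf_ae] with x hx hfx
    rw [hx]
    exact mul_nonneg (hw0 x) hfx
  · rw [← Lp.coeFn_le]
    filter_upwards [hmem.coeFn_toLp, hf_ae] with x hx hfx
    rw [hx]
    exact mul_le_of_le_one_left hfx (hw1 x)
  have hw_ne : ∀ᵐ x ∂μ, w x ≠ t :=
    ae_iff.2 (by
      simpa [Set.preimage] using (Set.subsingleton_singleton.preimage hw_inj).measure_zero μ)
  rw [Lp.eq_zero_iff_ae_eq_zero]
  filter_upwards [hmem.coeFn_toLp, Lp.coeFn_smul t f, hw_ne] with x hx hx' hwx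
  rw [ht, hx'] at hx
  have : (w x - t) * f x = 0 := by simp only [Pi.smul_apply, smul_eq_mul] at hx; linarith
  exact (mul_eq_zero.1 this).resolve_left (sub_ne_zero.2 hwx)

theorem const_nonneg [IsFiniteMeasure μ] {c : ℝ} (hc : 0 ≤ c) : 0 ≤ Lp.const p μ c := by
  rw [← Lp.coeFn_nonneg]
  filter_upwards [Lp.coeFn_const (p := p) (μ := μ) c] with x hx
  rw [hx]
  exact hc

end MeasureTheory.Lp

/-- The cone of nonnegative functions in `L¹([0,1])` has no cone-basis. -/
theorem stmt13 :
    ¬ ∃ B : Set (Lp ℝ 1 ((volume : Measure ℝ).restrict (Set.Icc (0 : ℝ) 1))),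
      (∀ b ∈ B, 0 ≤ b) ∧
      ∀ f : Lp ℝ 1 ((volume : Measure ℝ).restrict (Set.Icc (0 : ℝ) 1)), 0 ≤ f →
        ∃! α : B →₀ ℝ≥0,
          f = α.sum fun b c =>
            (c : ℝ) • (b : Lp ℝ 1 ((volume : Measure ℝ).restrict (Set.Icc (0 : ℝ) 1))) := by
  rintro ⟨B, hB⟩
  have hone : Lp.const 1 ((volume : Measure ℝ).restrict (Set.Icc (0 : ℝ) 1)) (1 : ℝ) ≠ 0 := by
    rw [← norm_ne_zero_iff, Lp.norm_const' _ _ _ one_ne_zero ENNReal.one_ne_top]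
    simp
  exact not_isConeBasis ⟨_, Lp.const_nonneg zero_le_one, hone⟩
    (fun _ hf hf0 => Lp.exists_nonneg_le_ne_smul hf hf0) B hB
end

section
/- Let 𝒮 = {a ∈ ℓ^∞(ℕ; ℝ) : aₙ ≥ 0 for all n} and let c₀ denote the space of real sequences converging to 0. Define A(a) = {b ∈ c₀ : 0 ≤ bₙ ≤ aₙ for all n} for a ∈ 𝒮. Then: (i) A is a linear set-valued map: each A(a) is a nonempty bounded convex subset of c₀ that is closed in c₀, A(a) + A(a′) = A(a + a′) (Minkowski sum) and A(λ • a) = λ • A(a) for all a, a′ ∈ 𝒮 and λ > 0; (ii) for every x ∈ c₀ with xₙ > 0 for all n, there exists no map a : 𝒮 → c₀ with a(z) ∈ A(z) for all z ∈ 𝒮, a(z + z′) = a(z) + a(z′), a(λ • z) = λ • a(z) for λ > 0, and a(x) = x. -/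
/-! A linear selection `sel` of `A` fixing `x` must fix every `0 ≤ z ≤ x`, since
`x = sel z + sel (x - z)` with `sel z ≤ z` and `sel (x - z) ≤ x - z`. In particular it fixes the
spike `x n • eₙ`, which lies below `x n • 1`; monotonicity and homogeneity then give
`x n ≤ x n * sel 1 n`, so `sel 1 ≥ 1` everywhere, incompatible with `sel 1 ∈ c₀`. -/

open Filter Topology
open scoped Pointwise

/-- The cone of nonnegative bounded sequences. -/
def stmt15Cone : Set (ℕ → ℝ) := {a | (∀ n, 0 ≤ a n) ∧ ∃ M, ∀ n, a n ≤ M}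

/-- The order interval `{b ∈ c₀ : 0 ≤ b ≤ a}` inside `c₀`. -/
def stmt15Map (a : ℕ → ℝ) : Set (ℕ → ℝ) :=
  {b | Tendsto b atTop (𝓝 0) ∧ ∀ n, 0 ≤ b n ∧ b n ≤ a n}

section Cone

lemma one_mem_stmt15Cone : (1 : ℕ → ℝ) ∈ stmt15Cone :=
  ⟨fun _ => zero_le_one, 1, fun _ => le_rfl⟩

lemma mem_stmt15Cone_of_tendsto {x : ℕ → ℝ} (hx : Tendsto x atTop (𝓝 0)) (hx0 : 0 ≤ x) :
    x ∈ stmt15Cone := by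
  obtain ⟨M, hM⟩ := hx.bddAbove_range
  exact ⟨hx0, M, fun n => hM ⟨n, rfl⟩⟩

lemma smul_mem_stmt15Cone {l : ℝ} (hl : 0 ≤ l) {z : ℕ → ℝ} (hz : z ∈ stmt15Cone) :
    l • z ∈ stmt15Cone := by
  obtain ⟨hz0, M, hM⟩ := hz
  exact ⟨fun n => mul_nonneg hl (hz0 n), l * M, fun n => mul_le_mul_of_nonneg_left (hM n) hl⟩

lemma sub_mem_stmt15Cone {z z' : ℕ → ℝ} (hz : z ∈ stmt15Cone) (hz' : z' ∈ stmt15Cone)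
    (hle : z ≤ z') : z' - z ∈ stmt15Cone := by
  obtain ⟨M, hM⟩ := hz'.2
  exact ⟨fun n => sub_nonneg.2 (hle n), M, fun n => (sub_le_self _ (hz.1 n)).trans (hM n)⟩

lemma single_mem_stmt15Cone {c : ℝ} (hc : 0 ≤ c) (n : ℕ) : Pi.single n c ∈ stmt15Cone :=
  ⟨(Pi.single_nonneg.2 hc : (0 : ℕ → ℝ) ≤ Pi.single n c), c, fun k => by
    rcases eq_or_ne k n with rfl | hk
    · simp
    · simpa [hk] using hc⟩

lemma single_apply_le_self {y : ℕ → ℝ} (hy : ∀ k, 0 ≤ y k) (n : ℕ) : Pi.single n (y n) ≤ y := by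
  intro k
  rcases eq_or_ne k n with rfl | hk
  · simp
  · simpa [hk] using hy k

end Cone

section OrderInterval

lemma mem_stmt15Map_iff {a b : ℕ → ℝ} :
    b ∈ stmt15Map a ↔ Tendsto b atTop (𝓝 0) ∧ 0 ≤ b ∧ b ≤ a := by
  simp only [stmt15Map, Set.mem_ofPred_eq, Pi.le_def, Pi.zero_apply, forall_and]

lemma stmt15Map_eq_inter_Icc (a : ℕ → ℝ) :
    stmt15Map a = {b | Tendsto b atTop (𝓝 0)} ∩ Set.Icc 0 a := by
  ext b
  rw [mem_stmt15Map_iff]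
  rfl

lemma zero_mem_stmt15Map {a : ℕ → ℝ} (ha : 0 ≤ a) : (0 : ℕ → ℝ) ∈ stmt15Map a :=
  mem_stmt15Map_iff.2 ⟨tendsto_const_nhds, le_rfl, ha⟩

lemma abs_le_of_mem_stmt15Map {a b : ℕ → ℝ} {M : ℝ} (haM : ∀ n, a n ≤ M) (hb : b ∈ stmt15Map a)
    (n : ℕ) : |b n| ≤ M := by
  rw [abs_of_nonneg (hb.2 n).1]
  exact (hb.2 n).2.trans (haM n)

lemma convex_stmt15Map (a : ℕ → ℝ) : Convex ℝ (stmt15Map a) := by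
  rw [stmt15Map_eq_inter_Icc]
  refine Convex.inter (fun b hb b' hb' θ τ _ _ _ => ?_) (convex_Icc 0 a)
  have := (hb.const_smul θ).add (hb'.const_smul τ)
  rwa [smul_zero, smul_zero, add_zero] at this

lemma mem_Icc_of_forall_abs_sub_le {lo hi x : ℝ}
    (h : ∀ ε : ℝ, 0 < ε → ∃ y ∈ Set.Icc lo hi, |x - y| ≤ ε) : x ∈ Set.Icc lo hi := by
  refine ⟨le_of_forall_pos_le_add fun ε hε => ?_, le_of_forall_pos_le_add fun ε hε => ?_⟩ <;>
  · obtain ⟨y, ⟨hlo, hhi⟩, hxy⟩ := h ε hε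
    linarith [abs_le.1 hxy]

lemma mem_stmt15Map_of_forall_abs_sub_le {a b : ℕ → ℝ} (hb : Tendsto b atTop (𝓝 0))
    (happrox : ∀ ε : ℝ, 0 < ε → ∃ b' ∈ stmt15Map a, ∀ n, |b n - b' n| ≤ ε) :
    b ∈ stmt15Map a :=
  ⟨hb, fun n => mem_Icc_of_forall_abs_sub_le fun ε hε =>
    let ⟨b', hb', hbb'⟩ := happrox ε hε
    ⟨b' n, hb'.2 n, hbb' n⟩⟩

lemma stmt15Map_add_subset (a a' : ℕ → ℝ) :
    stmt15Map a + stmt15Map a' ⊆ stmt15Map (a + a') := by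
  rintro _ ⟨b, hb, b', hb', rfl⟩
  rw [mem_stmt15Map_iff] at hb hb' ⊢
  exact ⟨add_zero (0 : ℝ) ▸ hb.1.add hb'.1, add_nonneg hb.2.1 hb'.2.1, add_le_add hb.2.2 hb'.2.2⟩

/-- Split `b ≤ a + a'` as `b ⊓ a` plus the remainder `b - b ⊓ a`. -/
lemma stmt15Map_add_supset {a a' : ℕ → ℝ} (ha : 0 ≤ a) (ha' : 0 ≤ a') :
    stmt15Map (a + a') ⊆ stmt15Map a + stmt15Map a' := by
  intro b hb
  obtain ⟨hb0, hb_nonneg, hb_le⟩ := mem_stmt15Map_iff.1 hb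
  have hinf_nonneg : 0 ≤ b ⊓ a := le_inf hb_nonneg ha
  have hinf : Tendsto (b ⊓ a) atTop (𝓝 0) :=
    squeeze_zero (fun n => hinf_nonneg n) (fun n => inf_le_left (a := b n)) hb0
  refine ⟨b ⊓ a, mem_stmt15Map_iff.2 ⟨hinf, hinf_nonneg, inf_le_right⟩,
    b - b ⊓ a, mem_stmt15Map_iff.2 ⟨sub_zero (0 : ℝ) ▸ hb0.sub hinf, sub_nonneg.2 inf_le_left, ?_⟩,
    add_sub_cancel _ _⟩
  rw [sub_le_iff_le_add, add_inf]
  exact le_inf (le_add_of_nonneg_left ha') (by rwa [add_comm])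

lemma stmt15Map_add {a a' : ℕ → ℝ} (ha : 0 ≤ a) (ha' : 0 ≤ a') :
    stmt15Map a + stmt15Map a' = stmt15Map (a + a') :=
  (stmt15Map_add_subset a a').antisymm (stmt15Map_add_supset ha ha')

lemma smul_stmt15Map_subset {l : ℝ} (hl : 0 ≤ l) (a : ℕ → ℝ) :
    l • stmt15Map a ⊆ stmt15Map (l • a) := by
  rintro _ ⟨b, hb, rfl⟩
  rw [mem_stmt15Map_iff] at hb ⊢
  exact ⟨(smul_zero l : l • (0 : ℝ) = 0) ▸ hb.1.const_smul l, smul_nonneg hl hb.2.1,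
    smul_le_smul_of_nonneg_left hb.2.2 hl⟩

lemma stmt15Map_smul {l : ℝ} (hl : 0 < l) (a : ℕ → ℝ) :
    stmt15Map (l • a) = l • stmt15Map a := by
  refine (Set.subset_smul_set_iff₀ hl.ne').2 ?_ |>.antisymm (smul_stmt15Map_subset hl.le a)
  simpa [inv_smul_smul₀ hl.ne'] using smul_stmt15Map_subset (inv_nonneg.2 hl.le) (l • a)

end OrderInterval

section LinearSelection

variable {sel : (ℕ → ℝ) → ℕ → ℝ}

lemma selection_eq_add_sub
    (hadd : ∀ z ∈ stmt15Cone, ∀ z' ∈ stmt15Cone, sel (z + z') = sel z + sel z')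
    {z z' : ℕ → ℝ} (hz : z ∈ stmt15Cone) (hz' : z' ∈ stmt15Cone)
    (hle : z ≤ z') : sel z' = sel z + sel (z' - z) := by
  simpa using hadd z hz (z' - z) (sub_mem_stmt15Cone hz hz' hle)

lemma selection_mono (hmem : ∀ z ∈ stmt15Cone, sel z ∈ stmt15Map z)
    (hadd : ∀ z ∈ stmt15Cone, ∀ z' ∈ stmt15Cone, sel (z + z') = sel z + sel z')
    {z z' : ℕ → ℝ} (hz : z ∈ stmt15Cone) (hz' : z' ∈ stmt15Cone)
    (hle : z ≤ z') : sel z ≤ sel z' := by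
  rw [selection_eq_add_sub hadd hz hz' hle]
  exact le_add_of_nonneg_right (mem_stmt15Map_iff.1 (hmem _ (sub_mem_stmt15Cone hz hz' hle))).2.1

lemma selection_eq_self_of_le (hmem : ∀ z ∈ stmt15Cone, sel z ∈ stmt15Map z)
    (hadd : ∀ z ∈ stmt15Cone, ∀ z' ∈ stmt15Cone, sel (z + z') = sel z + sel z')
    {x z : ℕ → ℝ} (hx : x ∈ stmt15Cone) (hfix : sel x = x) (hz : z ∈ stmt15Cone)
    (hle : z ≤ x) : sel z = z := by
  have hsplit := selection_eq_add_sub hadd hz hx hle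
  rw [hfix] at hsplit
  have hz_le := (mem_stmt15Map_iff.1 (hmem z hz)).2.2
  have hrest_le := (mem_stmt15Map_iff.1 (hmem _ (sub_mem_stmt15Cone hz hx hle))).2.2
  exact ((add_eq_add_iff_eq_and_eq hz_le hrest_le).1 (by rw [← hsplit, add_sub_cancel])).1

lemma one_le_selection_one (hmem : ∀ z ∈ stmt15Cone, sel z ∈ stmt15Map z)
    (hadd : ∀ z ∈ stmt15Cone, ∀ z' ∈ stmt15Cone, sel (z + z') = sel z + sel z')
    (hsmul : ∀ l : ℝ, 0 < l → ∀ z ∈ stmt15Cone, sel (l • z) = l • sel z)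
    {x : ℕ → ℝ} (hx : x ∈ stmt15Cone) (hxpos : ∀ n, 0 < x n) (hfix : sel x = x) (n : ℕ) :
    1 ≤ sel 1 n := by
  have hspike := single_mem_stmt15Cone (hxpos n).le n
  have hconst := smul_mem_stmt15Cone (hxpos n).le one_mem_stmt15Cone
  have hspike_fixed : sel (Pi.single n (x n)) = Pi.single n (x n) :=
    selection_eq_self_of_le hmem hadd hx hfix hspike (single_apply_le_self hx.1 n)
  have hspike_le : Pi.single n (x n) ≤ x n • (1 : ℕ → ℝ) := by
    simpa using single_apply_le_self hconst.1 n
  have hmono := selection_mono hmem hadd hspike hconst hspike_le n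
  rw [hspike_fixed, hsmul _ (hxpos n) 1 one_mem_stmt15Cone] at hmono
  exact (le_mul_iff_one_le_right (hxpos n)).1 (by simpa using hmono)

end LinearSelection

/-- Sharpness of the compact type condition: `A a = {b ∈ c₀ : 0 ≤ b ≤ a}`
defines a linear set-valued map on the cone of nonnegative bounded sequences
with nonempty bounded convex values closed in `c₀`, yet for every everywhere
positive `x ∈ c₀` there is no linear selection `a` of `A` with `a x = x`. -/
theorem stmt15 :
    (∀ a ∈ stmt15Cone, ∀ a' ∈ stmt15Cone,
      (stmt15Map a).Nonempty ∧
      (∃ M, ∀ b ∈ stmt15Map a, ∀ n, |b n| ≤ M) ∧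
      Convex ℝ (stmt15Map a) ∧
      (∀ b : ℕ → ℝ, Tendsto b atTop (𝓝 0) →
        (∀ ε : ℝ, 0 < ε → ∃ b' ∈ stmt15Map a, ∀ n, |b n - b' n| ≤ ε) →
        b ∈ stmt15Map a) ∧
      stmt15Map a + stmt15Map a' = stmt15Map (a + a') ∧
      (∀ l : ℝ, 0 < l → stmt15Map (l • a) = l • stmt15Map a)) ∧
    (∀ x : ℕ → ℝ, Tendsto x atTop (𝓝 0) → (∀ n, 0 < x n) →
      ¬ ∃ sel : (ℕ → ℝ) → ℕ → ℝ,
        (∀ z ∈ stmt15Cone, sel z ∈ stmt15Map z) ∧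
        (∀ z ∈ stmt15Cone, ∀ z' ∈ stmt15Cone, sel (z + z') = sel z + sel z') ∧
        (∀ l : ℝ, 0 < l → ∀ z ∈ stmt15Cone, sel (l • z) = l • sel z) ∧
        sel x = x) := by
  refine ⟨fun a ⟨ha, M, haM⟩ a' ⟨ha', _⟩ => ⟨⟨0, zero_mem_stmt15Map ha⟩,
    ⟨M, fun b hb => abs_le_of_mem_stmt15Map haM hb⟩, convex_stmt15Map a,
    fun b hb => mem_stmt15Map_of_forall_abs_sub_le hb, stmt15Map_add ha ha',
    fun l hl => stmt15Map_smul hl a⟩, ?_⟩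
  rintro x hx hxpos ⟨sel, hmem, hadd, hsmul, hfix⟩
  have hx_cone := mem_stmt15Cone_of_tendsto hx fun n => (hxpos n).le
  obtain ⟨n, hn⟩ := ((hmem 1 one_mem_stmt15Cone).1.eventually_lt_const zero_lt_one).exists
  exact absurd hn (not_lt.2 (one_le_selection_one hmem hadd hsmul hx_cone hxpos hfix n))
end
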